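/- arXiv:2307.14468 — 7 statements merged into one kernel-verified Lean document; each statement's English description precedes it below -/
import Mathlib

section
/- Let L be a first-order language and C a class of finite L-structures with k-ERP. Then for all A_1,…,A_n ∈ C each with exactly k elements and every B ∈ C into which each A_i embeds, there exists C' ∈ C such that for every family of colourings χ_i : Emb(A_i, C') → Fin 2 (for i ≤ n), there is an embedding g ∈ Emb(B, C') such that for every i ≤ n the map f ↦ χ_i(g ∘ f) is constant on Emb(A_i, B). -/
open FirstOrder

/-- A finite structure in the language `L`. -/
structure FinStruct (L : Language) where
  carrier : Type
  str : L.Structure carrier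
  fin : Finite carrier

attribute [instance] FinStruct.str FinStruct.fin

/-- `A` has embedding Ramsey degree at most `d` in the class `C`. -/
def embRamseyDegLE (L : Language) (C : Set (FinStruct L)) (A : FinStruct L) (d : ℕ) : Prop :=
  ∀ B ∈ C, ∀ n : ℕ, ∃ C' ∈ C, ∀ χ : (A.carrier ↪[L] C'.carrier) → Fin n,
    ∃ g : B.carrier ↪[L] C'.carrier,
      (Set.range fun f : A.carrier ↪[L] B.carrier => χ (g.comp f)).ncard ≤ d

/-- `C` has `k`-ERP: every member of `C` with exactly `k` elements is a Ramsey object,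
i.e. has embedding Ramsey degree at most `1`. -/
def kERP (L : Language) (C : Set (FinStruct L)) (k : ℕ) : Prop :=
  ∀ A ∈ C, Nat.card A.carrier = k → embRamseyDegLE L C A 1

/-! Induction on the number of colourings: given `C₁` that handles the first `n` colourings
for `B`, use that `A_{n+1}` is a Ramsey object to find `C'` in which a copy of `C₁` is
monochromatic for the last colouring, then pull the remaining colourings back to `C₁`. -/

namespace FinStruct

variable {L : Language}

/-- The arrow relation `C' ⟶ (B)^{A i}_r` for all `i` at once, one copy of `B` serving every
colouring. -/
def SimultaneouslyArrows {n : ℕ} (A : Fin n → FinStruct L) (B C' : FinStruct L) (r : ℕ) :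
    Prop :=
  ∀ χ : ∀ i, ((A i).carrier ↪[L] C'.carrier) → Fin r,
    ∃ g : B.carrier ↪[L] C'.carrier,
      ∀ i, ∀ f f' : (A i).carrier ↪[L] B.carrier, χ i (g.comp f) = χ i (g.comp f')

theorem simultaneouslyArrows_self (A : Fin 0 → FinStruct L) (B : FinStruct L) (r : ℕ) :
    SimultaneouslyArrows A B B r :=
  fun _ => ⟨Language.Embedding.refl L B.carrier, fun i => i.elim0⟩

theorem exists_monochromatic_of_embRamseyDegLE_one {C : Set (FinStruct L)} {A B : FinStruct L}
    (hA : embRamseyDegLE L C A 1) (hB : B ∈ C) (r : ℕ) :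
    ∃ C' ∈ C, ∀ χ : (A.carrier ↪[L] C'.carrier) → Fin r,
      ∃ g : B.carrier ↪[L] C'.carrier,
        ∀ f f' : A.carrier ↪[L] B.carrier, χ (g.comp f) = χ (g.comp f') := by
  obtain ⟨C', hC', hχ⟩ := hA B hB r
  refine ⟨C', hC', fun χ => ?_⟩
  obtain ⟨g, hg⟩ := hχ χ
  exact ⟨g, fun f f' => (Set.ncard_le_one (Set.toFinite _)).mp hg _ ⟨f, rfl⟩ _ ⟨f', rfl⟩⟩

theorem SimultaneouslyArrows.of_castSucc_of_last {m r : ℕ} {A : Fin (m + 1) → FinStruct L}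
    {B C₁ C₂ : FinStruct L}
    (h₁ : SimultaneouslyArrows (fun i => A i.castSucc) B C₁ r)
    (h₂ : ∀ χ : ((A (Fin.last m)).carrier ↪[L] C₂.carrier) → Fin r,
      ∃ g : C₁.carrier ↪[L] C₂.carrier,
        ∀ f f' : (A (Fin.last m)).carrier ↪[L] C₁.carrier, χ (g.comp f) = χ (g.comp f')) :
    SimultaneouslyArrows A B C₂ r := by
  intro χ
  obtain ⟨g₁, hg₁⟩ := h₂ (χ (Fin.last m))
  obtain ⟨g₂, hg₂⟩ := h₁ fun i f => χ i.castSucc (g₁.comp f)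
  exact ⟨g₁.comp g₂, Fin.lastCases (fun f f' => hg₁ (g₂.comp f) (g₂.comp f')) hg₂⟩

theorem exists_simultaneouslyArrows {C : Set (FinStruct L)} {n : ℕ} {A : Fin n → FinStruct L}
    (hA : ∀ i, embRamseyDegLE L C (A i) 1) {B : FinStruct L} (hB : B ∈ C) (r : ℕ) :
    ∃ C' ∈ C, SimultaneouslyArrows A B C' r := by
  induction n with
  | zero => exact ⟨B, hB, simultaneouslyArrows_self A B r⟩
  | succ m ih =>
    obtain ⟨C₁, hC₁, h₁⟩ := ih fun i => hA i.castSucc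
    obtain ⟨C₂, hC₂, h₂⟩ := exists_monochromatic_of_embRamseyDegLE_one (hA (Fin.last m)) hC₁ r
    exact ⟨C₂, hC₂, h₁.of_castSucc_of_last h₂⟩

end FinStruct

theorem kERP_simultaneous_colourings_general (L : Language) (C : Set (FinStruct L)) (k : ℕ)
    (hC : kERP L C k) (n : ℕ) (A : Fin n → FinStruct L) (B : FinStruct L)
    (hA : ∀ i, A i ∈ C) (hcard : ∀ i, Nat.card (A i).carrier = k) (hB : B ∈ C) :
    ∃ C' ∈ C, ∀ χ : ∀ i, ((A i).carrier ↪[L] C'.carrier) → Fin 2,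
      ∃ g : B.carrier ↪[L] C'.carrier,
        ∀ i, ∀ f f' : (A i).carrier ↪[L] B.carrier, χ i (g.comp f) = χ i (g.comp f') :=
  FinStruct.exists_simultaneouslyArrows (fun i => hC _ (hA i) (hcard i)) hB 2

theorem kERP_simultaneous_colourings (L : Language) (C : Set (FinStruct L)) (k : ℕ)
    (hC : kERP L C k) (n : ℕ) (A : Fin n → FinStruct L) (B : FinStruct L)
    (hA : ∀ i, A i ∈ C) (hcard : ∀ i, Nat.card (A i).carrier = k) (hB : B ∈ C)
    (hemb : ∀ i, Nonempty ((A i).carrier ↪[L] B.carrier)) :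
    ∃ C' ∈ C, ∀ χ : ∀ i, ((A i).carrier ↪[L] C'.carrier) → Fin 2,
      ∃ g : B.carrier ↪[L] C'.carrier,
        ∀ i, ∀ f f' : (A i).carrier ↪[L] B.carrier, χ i (g.comp f) = χ i (g.comp f') :=
  kERP_simultaneous_colourings_general L C k hC n A B hA hcard hB
end

section
/- Fix k ∈ ℕ with k ≥ 2, let V be a finite set, and let S be a (k+1)-uniform hypergraph on V. Then S satisfies condition (†) if and only if there exists a k-uniform hypergraph R on V such that S = K(R). -/
variable {α : Type*} [DecidableEq α]

/-- `R` is a `k`-uniform hypergraph on the vertex set `V`. -/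
def IsHypergraph (k : ℕ) (V : Finset α) (R : Set (Finset α)) : Prop :=
  ∀ e ∈ R, e ⊆ V ∧ e.card = k

/-- The Kay-graph of a `k`-uniform hypergraph `R` on `V`: the `(k+1)`-uniform hypergraph
on `V` whose hyperedges are the `(k+1)`-element subsets `A` of `V` such that the number of
`k`-element subsets of `A` belonging to `R` is congruent to `k + 1` modulo `2`. -/
def kay (k : ℕ) (V : Finset α) (R : Set (Finset α)) : Set (Finset α) :=
  {A | A ⊆ V ∧ A.card = k + 1 ∧
    {e : Finset α | e ⊆ A ∧ e.card = k ∧ e ∈ R}.ncard % 2 = (k + 1) % 2}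

/-- Condition (†) for a `(k+1)`-uniform hypergraph `S` on `V`: for every `(k+2)`-element
subset `W` of `V`, the number of `(k+1)`-element subsets of `W` belonging to `S` is
congruent to `k` modulo `2`. -/
def dagger (k : ℕ) (V : Finset α) (S : Set (Finset α)) : Prop :=
  ∀ W : Finset α, W ⊆ V → W.card = k + 2 →
    {A : Finset α | A ⊆ W ∧ A.card = k + 1 ∧ A ∈ S}.ncard % 2 = k % 2


/-! Identify a hypergraph with its indicator function into `ZMod 2`, and let `δ` be the mod-2
coboundary, which sums a cochain over the faces of a set. The Kay-graph of `R` has indicator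
`δ χ_R + k`, and since the constant cochain `k` has coboundary `(k + 2) k ≡ k`, condition (†)
says exactly that `χ_S + k` is a cocycle on the full simplex over `V`. The theorem is therefore
the acyclicity of the simplex in characteristic 2: `δ δ = 0` because every `k`-face of a
`(k + 2)`-set lies in exactly two of its `(k + 1)`-faces, and conversely the simplex is a cone
over any vertex `v`, so a cocycle `t` is the coboundary of `e ↦ t (insert v e)` (on faces
missing `v`). -/

theorem sum_powersetCard_sum_powersetCard {β M : Type*} [DecidableEq β] [AddCommMonoid M]
    (W : Finset β) (k : ℕ) (f : Finset β → M) :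
    ∑ A ∈ W.powersetCard (k + 1), ∑ e ∈ A.powersetCard k, f e
      = (W.card - k) • ∑ e ∈ W.powersetCard k, f e := by
  rw [Finset.sum_comm' (t' := W.powersetCard k)
    (s' := fun e => (W.powersetCard (k + 1)).filter (e ⊆ ·)), Finset.smul_sum]
  · refine Finset.sum_congr rfl fun e he => ?_
    rw [Finset.mem_powersetCard] at he
    rw [Finset.sum_const, Finset.card_filter_powersetCard_subset e W (k + 1) he.1 (by omega),
      he.2, Nat.add_sub_cancel_left, Nat.choose_one_right]
  · intro A e
    simp only [Finset.mem_powersetCard, Finset.mem_filter]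
    constructor
    · rintro ⟨⟨hAW, hA⟩, heA, he⟩
      exact ⟨⟨⟨hAW, hA⟩, heA⟩, heA.trans hAW, he⟩
    · rintro ⟨⟨⟨hAW, hA⟩, heA⟩, -, he⟩
      exact ⟨⟨hAW, hA⟩, heA, he⟩

def coboundary {β : Type*} (k : ℕ) (f : Finset β → ZMod 2) (A : Finset β) : ZMod 2 :=
  ∑ e ∈ A.powersetCard k, f e

def cone {β : Type*} [DecidableEq β] (v : β) (f : Finset β → ZMod 2) (e : Finset β) : ZMod 2 :=
  if v ∈ e then 0 else f (insert v e)

theorem coboundary_coboundary {β : Type*} [DecidableEq β] (k : ℕ) (f : Finset β → ZMod 2)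
    {W : Finset β} (hW : W.card = k + 2) : coboundary (k + 1) (coboundary k f) W = 0 := by
  unfold coboundary
  rw [sum_powersetCard_sum_powersetCard, hW, Nat.add_sub_cancel_left, CharTwo.two_nsmul]

theorem coboundary_cone {β : Type*} [DecidableEq β] {k : ℕ} {V : Finset β}
    {f : Finset β → ZMod 2} (hf : ∀ W ⊆ V, W.card = k + 2 → coboundary (k + 1) f W = 0)
    {v : β} (hv : v ∈ V) {A : Finset β} (hAV : A ⊆ V) (hA : A.card = k + 1) :
    coboundary k (cone v f) A = f A := by
  by_cases hvA : v ∈ A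
  · have hcard : (A.erase v).card = k := by
      rw [Finset.card_erase_of_mem hvA, hA, Nat.add_sub_cancel]
    have hface : A.erase v ∈ A.powersetCard k :=
      Finset.mem_powersetCard.2 ⟨Finset.erase_subset v A, hcard⟩
    rw [coboundary, Finset.sum_eq_single_of_mem _ hface, cone, if_neg (Finset.notMem_erase v A),
      Finset.insert_erase hvA]
    intro e he hne
    rw [Finset.mem_powersetCard] at he
    refine if_pos (by_contra fun hve => hne ?_)
    exact Finset.eq_of_subset_of_card_le
      (fun x hx => Finset.mem_erase.2 ⟨fun h => hve (h ▸ hx), he.1 hx⟩) (by rw [he.2, hcard])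
  · have hcocycle := hf (insert v A) (Finset.insert_subset hv hAV)
      (by rw [Finset.card_insert_of_notMem hvA, hA])
    have htop : A.powersetCard (k + 1) = {A} := hA ▸ Finset.powersetCard_self A
    have hnotface : A ∉ (A.powersetCard k).image (insert v) := by
      simp only [Finset.mem_image, not_exists, not_and]
      exact fun e _ h => hvA (h ▸ Finset.mem_insert_self v e)
    have hinj : Set.InjOn (insert v) (A.powersetCard k : Set (Finset β)) := fun x hx y hy =>
      Finset.insert_erase_invOn.2.injOn (fun h => hvA ((Finset.mem_powersetCard.1 hx).1 h))
        (fun h => hvA ((Finset.mem_powersetCard.1 hy).1 h))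
    rw [coboundary, Finset.powersetCard_succ_insert hvA, htop, ← Finset.insert_eq,
      Finset.sum_insert hnotface, Finset.sum_image hinj, CharTwo.add_eq_zero] at hcocycle
    rw [hcocycle, coboundary]
    exact Finset.sum_congr rfl fun e he =>
      if_neg fun hve => hvA ((Finset.mem_powersetCard.1 he).1 hve)

theorem exists_coboundary_eq {β : Type*} [DecidableEq β] {k : ℕ} {V : Finset β}
    {f : Finset β → ZMod 2} (hf : ∀ W ⊆ V, W.card = k + 2 → coboundary (k + 1) f W = 0) :
    ∃ R, IsHypergraph k V R ∧
      ∀ A ⊆ V, A.card = k + 1 → coboundary k (R.indicator 1) A = f A := by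
  rcases V.eq_empty_or_nonempty with rfl | ⟨v, hv⟩
  · refine ⟨∅, by simp [IsHypergraph], fun A hA hcard => ?_⟩
    simp [Finset.subset_empty.1 hA] at hcard
  refine ⟨{e | e ⊆ V ∧ e.card = k ∧ cone v f e = 1}, fun e he => ⟨he.1, he.2.1⟩,
    fun A hAV hA => ?_⟩
  rw [← coboundary_cone hf hv hAV hA]
  refine Finset.sum_congr rfl fun e he => ?_
  obtain ⟨heA, he⟩ := Finset.mem_powersetCard.1 he
  simp only [Set.indicator_apply, Set.mem_ofPred_eq, heA.trans hAV, he, true_and, Pi.one_apply]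
  generalize cone v f e = x
  revert x
  decide

theorem coboundary_add_natCast {β : Type*} {k : ℕ} (f : Finset β → ZMod 2) {W : Finset β}
    (hW : W.card = k + 2) :
    coboundary (k + 1) (fun A => f A + k) W = coboundary (k + 1) f W + k := by
  simp only [coboundary, Finset.sum_add_distrib, Finset.sum_const, Finset.card_powersetCard, hW,
    Nat.choose_succ_self_right, nsmul_eq_mul]
  congr 1
  push_cast
  generalize (k : ZMod 2) = x
  revert x
  decide

theorem natCast_ncard_faces_eq_coboundary {β : Type*} (k : ℕ) (R : Set (Finset β))
    (A : Finset β) :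
    ({e : Finset β | e ⊆ A ∧ e.card = k ∧ e ∈ R}.ncard : ZMod 2) =
      coboundary k (R.indicator 1) A := by
  classical
  have : {e : Finset β | e ⊆ A ∧ e.card = k ∧ e ∈ R} = ↑((A.powersetCard k).filter (· ∈ R)) := by
    ext e
    simp [Finset.mem_powersetCard, and_assoc]
  rw [this, Set.ncard_coe_finset, Finset.natCast_card_filter, coboundary]
  simp only [Set.indicator_apply, Pi.one_apply]

theorem mem_kay_iff {β : Type*} {k : ℕ} {V : Finset β} {R : Set (Finset β)} {A : Finset β} :
    A ∈ kay k V R ↔ A ⊆ V ∧ A.card = k + 1 ∧ coboundary k (R.indicator 1) A = k + 1 := by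
  simp only [kay, Set.mem_ofPred_eq, ← ZMod.natCast_eq_natCast_iff',
    ← natCast_ncard_faces_eq_coboundary, Nat.cast_add, Nat.cast_one]

theorem dagger_iff {β : Type*} {k : ℕ} {V : Finset β} {S : Set (Finset β)} :
    dagger k V S ↔ ∀ W ⊆ V, W.card = k + 2 → coboundary (k + 1) (S.indicator 1) W = k := by
  simp only [dagger, ← ZMod.natCast_eq_natCast_iff', ← natCast_ncard_faces_eq_coboundary]

theorem indicator_kay_apply {β : Type*} {k : ℕ} {V : Finset β} {R : Set (Finset β)}
    {A : Finset β} (hAV : A ⊆ V) (hA : A.card = k + 1) :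
    (kay k V R).indicator 1 A = coboundary k (R.indicator 1) A + k := by
  classical
  simp only [Set.indicator_apply, mem_kay_iff, hAV, hA, true_and, Pi.one_apply]
  generalize coboundary k (R.indicator 1) A = x
  generalize (k : ZMod 2) = c
  revert x c
  decide

theorem dagger_iff_exists_kay_general (k : ℕ) (V : Finset α) (S : Set (Finset α))
    (hS : IsHypergraph (k + 1) V S) :
    dagger k V S ↔ ∃ R : Set (Finset α), IsHypergraph k V R ∧ kay k V R = S := by
  rw [dagger_iff]
  constructor
  · intro hd
    obtain ⟨R, hR, hδR⟩ := exists_coboundary_eq (f := fun A => S.indicator 1 A + k)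
      fun W hWV hW => by rw [coboundary_add_natCast _ hW, hd W hWV hW, CharTwo.add_self_eq_zero]
    refine ⟨R, hR, Set.ext fun A => ⟨fun hA => ?_, fun hAS => ?_⟩⟩
    · obtain ⟨hAV, hA, hδ⟩ := mem_kay_iff.1 hA
      rw [hδR A hAV hA, add_comm, add_right_inj] at hδ
      exact Set.mem_of_indicator_ne_zero (hδ ▸ one_ne_zero)
    · obtain ⟨hAV, hA⟩ := hS A hAS
      refine mem_kay_iff.2 ⟨hAV, hA, ?_⟩
      rw [hδR A hAV hA, Set.indicator_of_mem hAS, Pi.one_apply, add_comm]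
  · rintro ⟨R, -, rfl⟩ W hWV hW
    have hfaces : ∀ A ∈ W.powersetCard (k + 1),
        (kay k V R).indicator 1 A = coboundary k (R.indicator 1) A + k := fun A hA =>
      indicator_kay_apply ((Finset.mem_powersetCard.1 hA).1.trans hWV)
        (Finset.mem_powersetCard.1 hA).2
    rw [coboundary, Finset.sum_congr rfl hfaces, ← coboundary, coboundary_add_natCast _ hW,
      coboundary_coboundary k _ hW, zero_add]

/-- A `(k+1)`-uniform hypergraph `S` on a finite set `V` satisfies condition (†) if and
only if it is the Kay-graph of some `k`-uniform hypergraph `R` on `V`. -/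
theorem dagger_iff_exists_kay (k : ℕ) (hk : 2 ≤ k) (V : Finset α) (S : Set (Finset α))
    (hS : IsHypergraph (k + 1) V S) :
    dagger k V S ↔ ∃ R : Set (Finset α), IsHypergraph k V R ∧ kay k V R = S :=
  dagger_iff_exists_kay_general k V S hS
end

section
/- Fix k ∈ ℕ with k ≥ 2, let V be a finite set and R a k-uniform hypergraph on V. Then K(R) satisfies condition (†): for every (k+2)-element subset W of V, the number of (k+1)-element subsets of W that belong to K(R) is congruent to k modulo 2. -/
variable {α : Type*} [DecidableEq α]

/-!
Fix a `(k+2)`-set `W` and let `E` be the edges of `R` inside `W`. For a `(k+1)`-subset `A` of `W`,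
membership in the Kay-graph depends only on the parity of the number `g A` of edges of `E`
inside `A`. Each `k`-subset of `W` lies in exactly two `(k+1)`-subsets of `W`, so by double
counting `∑ g A = 2 #E` is even. Modulo 2 the indicator of `g A ≡ k + 1` is `g A + k`, hence
the number of Kay-edges inside `W` is `∑ g A + (k + 2) k ≡ k`.
-/

open Finset

lemma sum_card_filter_subset_powersetCard {k : ℕ} {W : Finset α} {E : Finset (Finset α)}
    (hE : E ⊆ W.powersetCard k) :
    ∑ A ∈ W.powersetCard (k + 1), #{e ∈ E | e ⊆ A} = (#W - k) * #E := by
  have hcount : ∀ e ∈ E, #{A ∈ W.powersetCard (k + 1) | e ⊆ A} = #W - k := by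
    intro e he
    obtain ⟨heW, hek⟩ := mem_powersetCard.mp (hE he)
    rw [card_filter_powersetCard_subset e W (k + 1) heW (by omega), hek,
      Nat.add_sub_cancel_left, Nat.choose_one_right]
  calc ∑ A ∈ W.powersetCard (k + 1), #{e ∈ E | e ⊆ A}
      = ∑ e ∈ E, #{A ∈ W.powersetCard (k + 1) | e ⊆ A} :=
        sum_card_bipartiteAbove_eq_sum_card_bipartiteBelow (fun (A e : Finset α) => e ⊆ A)
    _ = (#W - k) * #E := by rw [sum_congr rfl hcount, sum_const, smul_eq_mul, mul_comm]

lemma natCast_card_filter_mod_two_eq {ι : Type*} (s : Finset ι) (f : ι → ℕ) (c : ℕ) :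
    (#{i ∈ s | f i % 2 = c % 2} : ZMod 2) = ∑ i ∈ s, (f i : ZMod 2) + #s * (c + 1) := by
  have hterm : ∀ i ∈ s,
      (if f i % 2 = c % 2 then 1 else 0 : ZMod 2) = f i + (c + 1) := by
    intro i _
    rw [← ZMod.natCast_mod (f i) 2, ← ZMod.natCast_mod c 2]
    rcases Nat.mod_two_eq_zero_or_one (f i) with hf | hf <;>
      rcases Nat.mod_two_eq_zero_or_one c with hc | hc <;>
      simp only [hf, hc] <;> decide
  rw [card_filter, Nat.cast_sum, sum_congr rfl (by simpa using hterm), sum_add_distrib,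
    sum_const, nsmul_eq_mul]

lemma ncard_setOf_subset_card_mem {k : ℕ} {A W : Finset α} {R : Set (Finset α)}
    [DecidablePred (· ∈ R)] (hAW : A ⊆ W) :
    {e : Finset α | e ⊆ A ∧ e.card = k ∧ e ∈ R}.ncard =
      #{e ∈ {e ∈ W.powersetCard k | e ∈ R} | e ⊆ A} := by
  rw [← Set.ncard_coe_finset]
  congr 1
  ext e
  simp only [Set.mem_ofPred_eq, coe_filter, mem_filter, mem_powersetCard]
  exact ⟨fun ⟨heA, hek, heR⟩ => ⟨⟨⟨heA.trans hAW, hek⟩, heR⟩, heA⟩,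
    fun ⟨⟨⟨_, hek⟩, heR⟩, heA⟩ => ⟨heA, hek, heR⟩⟩

lemma setOf_subset_card_mem_kay {k : ℕ} {V W : Finset α} {R : Set (Finset α)}
    [DecidablePred (· ∈ R)] (hWV : W ⊆ V) :
    {A : Finset α | A ⊆ W ∧ A.card = k + 1 ∧ A ∈ kay k V R} =
      ↑{A ∈ W.powersetCard (k + 1) |
        #{e ∈ {e ∈ W.powersetCard k | e ∈ R} | e ⊆ A} % 2 = (k + 1) % 2} := by
  ext A
  simp only [kay, Set.mem_ofPred_eq, coe_filter, mem_powersetCard]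
  constructor
  · rintro ⟨hAW, hAk, -, -, hodd⟩
    rw [ncard_setOf_subset_card_mem hAW] at hodd
    exact ⟨⟨hAW, hAk⟩, hodd⟩
  · rintro ⟨⟨hAW, hAk⟩, hodd⟩
    rw [← ncard_setOf_subset_card_mem hAW] at hodd
    exact ⟨hAW, hAk, hAW.trans hWV, hAk, hodd⟩

theorem kay_satisfies_dagger_general (k : ℕ) (V : Finset α) (R : Set (Finset α)) :
    dagger k V (kay k V R) := by
  classical
  intro W hWV hW
  rw [setOf_subset_card_mem_kay hWV, Set.ncard_coe_finset, ← ZMod.natCast_eq_natCast_iff',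
    natCast_card_filter_mod_two_eq, ← Nat.cast_sum,
    sum_card_filter_subset_powersetCard (filter_subset (· ∈ R) _), card_powersetCard, hW,
    Nat.choose_succ_self_right, Nat.add_sub_cancel_left]
  push_cast
  generalize (k : ZMod 2) = x
  generalize (#{e ∈ W.powersetCard k | e ∈ R} : ZMod 2) = y
  revert x y
  decide

/-- The Kay-graph of a `k`-uniform hypergraph satisfies condition (†). -/
theorem kay_satisfies_dagger (k : ℕ) (hk : 2 ≤ k) (V : Finset α) (R : Set (Finset α))
    (hR : IsHypergraph k V R) : dagger k V (kay k V R) :=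
  kay_satisfies_dagger_general k V R
end

section
/- Fix k ∈ ℕ with k ≥ 2, let V be a finite set, let S be a (k+1)-uniform hypergraph on V satisfying condition (†), and let ⋆ ∈ V. Define a k-uniform hypergraph R on V by: every k-element subset of V containing ⋆ belongs to R, and a k-element subset e with ⋆ ∉ e belongs to R if and only if e ∪ {⋆} ∈ S. Then K(R) = S. -/
variable {α : Type*} [DecidableEq α]

/-! A `k`-subset of a `(k+1)`-set `A` is `A.erase a` for a unique `a ∈ A`, so the counts in
`kay` and `dagger` are counts of points. Let `R` be the star hypergraph. If `⋆ ∈ A`, every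
`A.erase a` with `a ≠ ⋆` contains `⋆` and lies in `R`, while `A.erase ⋆ ∈ R ↔ A ∈ S`; so `A` has
`k + [A ∈ S]` facets in `R`. If `⋆ ∉ A`, apply (†) to `W = insert ⋆ A`: the facet `W.erase ⋆ = A`
contributes `[A ∈ S]`, and for `a ∈ A` the facet `W.erase a = insert ⋆ (A.erase a)` lies in `S`
iff `A.erase a ∈ R`; so the count is again `k + [A ∈ S]` modulo `2`. -/

namespace Finset

theorem card_filter_eq_ite_add_card_filter_erase {s : Finset α} {x : α} (hx : x ∈ s)
    (p : α → Prop) [DecidablePred p] :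
    #{a ∈ s | p a} = (if p x then 1 else 0) + #{a ∈ s.erase x | p a} := by
  conv_lhs => rw [← insert_erase hx, filter_insert]
  split_ifs
  · rw [card_insert_of_notMem (fun h => notMem_erase x s (mem_of_mem_filter x h)), add_comm]
  · rw [zero_add]

theorem card_filter_powersetCard_eq_card_filter_erase {s : Finset α} {n : ℕ} (hs : #s = n + 1)
    (p : Finset α → Prop) [DecidablePred p] :
    #{t ∈ s.powersetCard n | p t} = #{a ∈ s | p (s.erase a)} := by
  symm
  refine card_bij (fun a _ => s.erase a) ?_ ?_ ?_
  · intro a ha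
    rw [mem_filter] at ha ⊢
    refine ⟨mem_powersetCard.2 ⟨erase_subset _ _, ?_⟩, ha.2⟩
    rw [card_erase_of_mem ha.1, hs, Nat.add_sub_cancel]
  · intro a ha b hb hab
    exact s.erase_injOn (mem_filter.1 ha).1 (mem_filter.1 hb).1 hab
  · intro t ht
    obtain ⟨hts, htn⟩ := mem_powersetCard.1 (mem_filter.1 ht).1
    obtain ⟨a, has, hat⟩ := exists_of_ssubset (ssubset_of_subset_of_ne hts (by grind))
    have hta : t = s.erase a :=
      eq_of_subset_of_card_le (subset_erase.2 ⟨hts, hat⟩) (by grind [card_erase_of_mem])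
    exact ⟨a, mem_filter.2 ⟨has, hta ▸ (mem_filter.1 ht).2⟩, hta.symm⟩

theorem ncard_setOf_subset_card_eq_card_filter_erase {s : Finset α} {n : ℕ} (hs : #s = n + 1)
    (p : Finset α → Prop) [DecidablePred p] :
    {t : Finset α | t ⊆ s ∧ #t = n ∧ p t}.ncard = #{a ∈ s | p (s.erase a)} := by
  rw [← card_filter_powersetCard_eq_card_filter_erase hs, ← Set.ncard_coe_finset]
  congr 1
  ext t
  simp [mem_powersetCard, and_assoc]

end Finset

open Finset

def starHypergraph (k : ℕ) (V : Finset α) (S : Set (Finset α)) (star : α) : Set (Finset α) :=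
  {e | e ⊆ V ∧ e.card = k ∧ (star ∈ e ∨ (star ∉ e ∧ insert star e ∈ S))}

section StarHypergraph

variable {k : ℕ} {V : Finset α} {S : Set (Finset α)} {star : α} {A : Finset α}

open Classical in
theorem card_filter_erase_mem_starHypergraph_of_mem (hAV : A ⊆ V) (hA : #A = k + 1)
    (hsA : star ∈ A) :
    #{a ∈ A | A.erase a ∈ starHypergraph k V S star} = (if A ∈ S then 1 else 0) + k := by
  have hA' : #(A.erase star) = k := by rw [card_erase_of_mem hsA, hA, Nat.add_sub_cancel]
  have h_star : A.erase star ∈ starHypergraph k V S star ↔ A ∈ S := by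
    simp [starHypergraph, insert_erase hsA, hA', (erase_subset _ _).trans hAV]
  have h_other : ∀ a ∈ A.erase star, A.erase a ∈ starHypergraph k V S star := by
    intro a ha
    refine ⟨(erase_subset _ _).trans hAV, ?_, Or.inl (mem_erase.2 ⟨?_, hsA⟩)⟩
    · rw [card_erase_of_mem (mem_of_mem_erase ha), hA, Nat.add_sub_cancel]
    · exact (ne_of_mem_erase ha).symm
  rw [card_filter_eq_ite_add_card_filter_erase hsA, filter_true_of_mem h_other, hA',
    if_congr h_star rfl rfl]

open Classical in
theorem card_filter_erase_mem_starHypergraph_of_notMem (hdag : dagger k V S) (hstar : star ∈ V)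
    (hAV : A ⊆ V) (hA : #A = k + 1) (hsA : star ∉ A) :
    ((if A ∈ S then 1 else 0) + #{a ∈ A | A.erase a ∈ starHypergraph k V S star}) % 2 = k % 2 := by
  have hW : #(insert star A) = k + 1 + 1 := by rw [card_insert_of_notMem hsA, hA]
  have h_other : ∀ a ∈ A,
      (insert star A).erase a ∈ S ↔ A.erase a ∈ starHypergraph k V S star := by
    intro a ha
    have hsa : star ∉ A.erase a := fun h => hsA (mem_of_mem_erase h)
    rw [erase_insert_of_ne (ne_of_mem_of_not_mem ha hsA).symm]
    simp [starHypergraph, hsa, (erase_subset _ _).trans hAV, card_erase_of_mem ha, hA]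
  have := hdag _ (insert_subset hstar hAV) hW
  rwa [ncard_setOf_subset_card_eq_card_filter_erase hW,
    card_filter_eq_ite_add_card_filter_erase (mem_insert_self star A), erase_insert hsA,
    filter_congr h_other] at this

theorem mem_kay_starHypergraph_iff (hdag : dagger k V S) (hstar : star ∈ V) (hAV : A ⊆ V) (hA : #A = k + 1) :
    A ∈ kay k V (starHypergraph k V S star) ↔ A ∈ S := by
  classical
  have hcount : {e | e ⊆ A ∧ #e = k ∧ e ∈ starHypergraph k V S star}.ncard % 2 =
      ((if A ∈ S then 1 else 0) + k) % 2 := by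
    rw [ncard_setOf_subset_card_eq_card_filter_erase hA]
    by_cases hsA : star ∈ A
    · rw [card_filter_erase_mem_starHypergraph_of_mem hAV hA hsA]
    · have := card_filter_erase_mem_starHypergraph_of_notMem hdag hstar hAV hA hsA
      omega
  change A ⊆ V ∧ #A = k + 1 ∧ _ ↔ _
  rw [and_iff_right hAV, and_iff_right hA, hcount]
  split_ifs with hAS <;> simp only [hAS, iff_true, iff_false] <;> omega

end StarHypergraph

theorem kay_of_star_hypergraph_general (k : ℕ) (V : Finset α) (S : Set (Finset α))
    (hS : IsHypergraph (k + 1) V S) (hdag : dagger k V S) (star : α) (hstar : star ∈ V) :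
    kay k V {e : Finset α | e ⊆ V ∧ e.card = k ∧
      (star ∈ e ∨ (star ∉ e ∧ insert star e ∈ S))} = S := by
  ext A
  refine ⟨fun hA => ?_, fun hA => ?_⟩
  · exact (mem_kay_starHypergraph_iff hdag hstar hA.1 hA.2.1).1 hA
  · exact (mem_kay_starHypergraph_iff hdag hstar (hS A hA).1 (hS A hA).2).2 hA

/-- Given a `(k+1)`-uniform hypergraph `S` on `V` satisfying (†) and a point `⋆ ∈ V`,
the `k`-uniform hypergraph `R` consisting of all `k`-element subsets of `V` containing `⋆`
together with those `k`-element subsets `e` not containing `⋆` with `e ∪ {⋆} ∈ S`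
has Kay-graph exactly `S`. -/
theorem kay_of_star_hypergraph (k : ℕ) (hk : 2 ≤ k) (V : Finset α) (S : Set (Finset α))
    (hS : IsHypergraph (k + 1) V S) (hdag : dagger k V S) (star : α) (hstar : star ∈ V) :
    kay k V {e : Finset α | e ⊆ V ∧ e.card = k ∧
      (star ∈ e ∨ (star ∉ e ∧ insert star e ∈ S))} = S :=
  kay_of_star_hypergraph_general k V S hS hdag star hstar
end

section
/- Fix k ∈ ℕ with k ≥ 2. The class P^(k) of all finite (k+1)-uniform hypergraphs satisfying condition (†) has the amalgamation property: for all (V_0,S_0), (V_1,S_1), (V_2,S_2) in P^(k) and embeddings f_1 : (V_0,S_0) → (V_1,S_1) and f_2 : (V_0,S_0) → (V_2,S_2), there exist (V,S) in P^(k) and embeddings g_1 : (V_1,S_1) → (V,S) and g_2 : (V_2,S_2) → (V,S) with g_1 ∘ f_1 = g_2 ∘ f_2. -/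
/-- A finite `m`-uniform hypergraph: a finite vertex type together with a set of
`m`-element subsets of the vertices. -/
structure FinHyp (m : ℕ) where
  V : Type
  deceq : DecidableEq V
  fin : Fintype V
  S : Set (Finset V)
  uniform : ∀ e ∈ S, e.card = m

attribute [instance] FinHyp.deceq FinHyp.fin

/-- Condition (†) for a `(k+1)`-uniform hypergraph: every `(k+2)`-element set of vertices
spans a number of hyperedges congruent to `k` modulo `2`. -/
def Dagger (k : ℕ) {V : Type} (S : Set (Finset V)) : Prop :=
  ∀ W : Finset V, W.card = k + 2 →
    {A : Finset V | A ⊆ W ∧ A.card = k + 1 ∧ A ∈ S}.ncard % 2 = k % 2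

/-- An embedding of hypergraphs: an injection preserving membership of edge-sized subsets
in the hyperedge relation in both directions. -/
def IsEmb {m : ℕ} (H₁ H₂ : FinHyp m) (f : H₁.V → H₂.V) : Prop :=
  Function.Injective f ∧
    ∀ e : Finset H₁.V, e.card = m → (e ∈ H₁.S ↔ e.image f ∈ H₂.S)

section AmalgamationHelpers

open Finset

variable {V : Type} [DecidableEq V]

lemma sum_powersetCard_image {W : Type} [DecidableEq W] (f : V → W) (hf : Function.Injective f)
    (e : Finset V) (m : ℕ) (G : Finset W → ZMod 2) :
    ∑ d ∈ (e.image f).powersetCard m, G d = ∑ d ∈ e.powersetCard m, G (d.image f) := by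
  classical
  have him : e.image f = e.map ⟨f, hf⟩ := by simp [map_eq_image]
  rw [him, powersetCard_map, Finset.sum_map]
  apply Finset.sum_congr rfl
  intro d _
  congr 1
  show d.map ⟨f, hf⟩ = d.image f
  simp [map_eq_image]

lemma card_filter_superset (W d : Finset V) (m : ℕ) (hd : d ∈ W.powersetCard m) :
    ((W.powersetCard (m+1)).filter (fun A => d ⊆ A)).card = W.card - m := by
  classical
  obtain ⟨hdW, hdc⟩ := Finset.mem_powersetCard.mp hd
  have key : (W.powersetCard (m+1)).filter (fun A => d ⊆ A)
      = (W \ d).image (fun x => insert x d) := by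
    ext A
    simp only [Finset.mem_filter, Finset.mem_powersetCard, Finset.mem_image, Finset.mem_sdiff]
    constructor
    · rintro ⟨⟨hAW, hAc⟩, hdA⟩
      obtain ⟨x, hx, hxd⟩ : ∃ x ∈ A, x ∉ d := by
        by_contra h
        push_neg at h
        have hAd : A ⊆ d := h
        have := Finset.card_le_card hAd
        omega
      refine ⟨x, ⟨⟨hAW hx, hxd⟩, ?_⟩⟩
      apply Finset.eq_of_subset_of_card_le
      · intro y hy
        rcases Finset.mem_insert.mp hy with rfl | hy
        · exact hx
        · exact hdA hy
      · rw [Finset.card_insert_of_notMem hxd]; omega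
    · rintro ⟨x, ⟨hxW, hxd⟩, rfl⟩
      refine ⟨⟨Finset.insert_subset hxW hdW, ?_⟩, Finset.subset_insert _ _⟩
      rw [Finset.card_insert_of_notMem hxd]; omega
  rw [key, Finset.card_image_of_injOn, Finset.card_sdiff_of_subset hdW, hdc]
  intro x hx y hy hxy
  have hx' : x ∉ d := (Finset.mem_sdiff.mp hx).2
  have hxy' : insert x d = insert y d := hxy
  have hmem : x ∈ insert y d := by
    rw [← hxy']; exact Finset.mem_insert_self x d
  rcases Finset.mem_insert.mp hmem with h | h
  · exact h
  · exact absurd h hx'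

lemma double_sum_powersetCard (W : Finset V) (m : ℕ) (g : Finset V → ZMod 2) :
    ∑ A ∈ W.powersetCard (m+1), ∑ d ∈ A.powersetCard m, g d
      = ∑ d ∈ W.powersetCard m, (W.card - m) • g d := by
  classical
  have h1 : ∀ A ∈ W.powersetCard (m+1), ∑ d ∈ A.powersetCard m, g d
      = ∑ d ∈ W.powersetCard m, if d ⊆ A then g d else 0 := by
    intro A hA
    obtain ⟨hAW, hAc⟩ := Finset.mem_powersetCard.mp hA
    rw [← Finset.sum_filter]
    congr 1
    ext d
    simp only [Finset.mem_powersetCard, Finset.mem_filter]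
    exact ⟨fun ⟨h1', h2'⟩ => ⟨⟨h1'.trans hAW, h2'⟩, h1'⟩, fun ⟨⟨_, h2'⟩, h3'⟩ => ⟨h3', h2'⟩⟩
  rw [Finset.sum_congr rfl h1, Finset.sum_comm]
  apply Finset.sum_congr rfl
  intro d hd
  rw [← Finset.sum_filter, Finset.sum_const, card_filter_superset W d m hd]

lemma ite_eq_zero_char2 (x : ZMod 2) : (if x = 0 then (1 : ZMod 2) else 0) = x + 1 := by
  revert x; decide

lemma cone_lemma [Fintype V] (m : ℕ) (ψ : Finset V → ZMod 2)
    (hψ : ∀ W : Finset V, W.card = m + 2 → ∑ e ∈ W.powersetCard (m+1), ψ e = 0) :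
    ∃ g : Finset V → ZMod 2, ∀ e : Finset V, e.card = m + 1 →
      ψ e = ∑ d ∈ e.powersetCard m, g d := by
  classical
  rcases isEmpty_or_nonempty V with hV | hV
  · refine ⟨0, fun e he => ?_⟩
    obtain ⟨x, hx⟩ := Finset.card_pos.mp (by omega : 0 < e.card)
    exact (IsEmpty.false x).elim
  obtain ⟨v₀⟩ := hV
  refine ⟨fun d => if v₀ ∈ d then 0 else ψ (insert v₀ d), fun e he => ?_⟩
  by_cases hv : v₀ ∈ e
  · -- e contains v₀ : only the subset e.erase v₀ contributes
    have hfil : (e.powersetCard m).filter (fun d => v₀ ∉ d) = {e.erase v₀} := by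
      ext d
      simp only [Finset.mem_filter, Finset.mem_powersetCard, Finset.mem_singleton]
      constructor
      · rintro ⟨⟨hde, hdc⟩, hvd⟩
        apply Finset.eq_of_subset_of_card_le
        · exact Finset.subset_erase.mpr ⟨hde, hvd⟩
        · rw [Finset.card_erase_of_mem hv, he, hdc]; omega
      · rintro rfl
        exact ⟨⟨Finset.erase_subset _ _, by rw [Finset.card_erase_of_mem hv, he]; omega⟩,
          Finset.notMem_erase _ _⟩
    have : ∀ d ∈ e.powersetCard m, (if v₀ ∈ d then (0:ZMod 2) else ψ (insert v₀ d))
        = if v₀ ∉ d then ψ (insert v₀ d) else 0 := by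
      intro d _; by_cases h : v₀ ∈ d <;> simp [h]
    rw [Finset.sum_congr rfl this, ← Finset.sum_filter, hfil, Finset.sum_singleton,
      Finset.insert_erase hv]
  · -- e does not contain v₀ : use hψ on insert v₀ e
    have hW : (insert v₀ e).card = m + 2 := by
      rw [Finset.card_insert_of_notMem hv]; omega
    have h0 := hψ _ hW
    rw [show m + 1 = Nat.succ m from rfl, Finset.powersetCard_succ_insert hv] at h0
    have hdisj : Disjoint (e.powersetCard (m+1)) ((e.powersetCard m).image (insert v₀)) := by
      rw [Finset.disjoint_left]
      intro A hA hA2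
      obtain ⟨d, hd, rfl⟩ := Finset.mem_image.mp hA2
      obtain ⟨hAe, _⟩ := Finset.mem_powersetCard.mp hA
      exact hv (hAe (Finset.mem_insert_self v₀ d))
    rw [Finset.sum_union hdisj] at h0
    have h1 : e.powersetCard (m+1) = {e} := by
      rw [← he, Finset.powersetCard_self]
    rw [h1, Finset.sum_singleton] at h0
    have h2 : ∑ A ∈ (e.powersetCard m).image (insert v₀), ψ A
        = ∑ d ∈ e.powersetCard m, ψ (insert v₀ d) := by
      apply Finset.sum_image
      intro x hx y hy hxy
      obtain ⟨hxe, hxc⟩ := Finset.mem_powersetCard.mp hx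
      obtain ⟨hye, hyc⟩ := Finset.mem_powersetCard.mp hy
      have hvx : v₀ ∉ x := fun h => hv (hxe h)
      have hvy : v₀ ∉ y := fun h => hv (hye h)
      ext z
      constructor
      · intro hz
        have : z ∈ insert v₀ y := hxy ▸ Finset.mem_insert_of_mem hz
        rcases Finset.mem_insert.mp this with rfl | h
        · exact absurd hz hvx
        · exact h
      · intro hz
        have : z ∈ insert v₀ x := hxy ▸ Finset.mem_insert_of_mem hz
        rcases Finset.mem_insert.mp this with rfl | h
        · exact absurd hz hvy
        · exact h
    rw [h2] at h0
    have h3 : ∀ d ∈ e.powersetCard m,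
        (if v₀ ∈ d then (0:ZMod 2) else ψ (insert v₀ d)) = ψ (insert v₀ d) := by
      intro d hd
      obtain ⟨hde, _⟩ := Finset.mem_powersetCard.mp hd
      rw [if_neg (fun h => hv (hde h))]
    rw [Finset.sum_congr rfl h3]
    -- h0 : ψ e + ∑ = 0, so ψ e = ∑ in char 2
    have := congrArg (· + ψ e) h0
    simp only [zero_add] at this
    calc ψ e = ψ e + (ψ e + ∑ d ∈ e.powersetCard m, ψ (insert v₀ d)) := by
          rw [h0, add_zero]
      _ = ∑ d ∈ e.powersetCard m, ψ (insert v₀ d) := by ring_nf; rw [show (2:ZMod 2) = 0 by decide]; ring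

open scoped Classical in
lemma dagger_iff_s6 (k : ℕ) (S : Set (Finset V)) :
    Dagger k S ↔ ∀ W : Finset V, W.card = k + 2 →
      ∑ A ∈ W.powersetCard (k+1), (if A ∈ S then (1:ZMod 2) else 0) = (k : ZMod 2) := by
  classical
  unfold Dagger
  apply forall_congr'
  intro W
  apply imp_congr_right
  intro _
  have hset : {A : Finset V | A ⊆ W ∧ A.card = k + 1 ∧ A ∈ S}
      = ↑((W.powersetCard (k+1)).filter (· ∈ S)) := by
    ext A
    simp [Finset.mem_powersetCard, and_assoc]
  rw [hset, Set.ncard_coe_finset, Finset.sum_boole]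
  rw [ZMod.natCast_eq_natCast_iff]
  exact Iff.rfl

lemma char2 : (2 : ZMod 2) = 0 := by decide

open scoped Classical in
lemma dagger_potential [Fintype V] (k : ℕ) (S : Set (Finset V)) (hd : Dagger k S) :
    ∃ g : Finset V → ZMod 2, ∀ e : Finset V, e.card = k + 1 →
      (if e ∈ S then (1:ZMod 2) else 0) = (∑ d ∈ e.powersetCard k, g d) + 1 := by
  classical
  rw [dagger_iff_s6] at hd
  have hom : ∀ W : Finset V, W.card = k + 2 →
      ∑ e ∈ W.powersetCard (k+1), ((if e ∈ S then (1:ZMod 2) else 0) + 1) = 0 := by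
    intro W hW
    rw [Finset.sum_add_distrib, hd W hW, Finset.sum_const, Finset.card_powersetCard, hW,
      Nat.choose_succ_self_right, nsmul_eq_mul, mul_one]
    push_cast
    linear_combination ((k : ZMod 2) + 1) * char2
  obtain ⟨g, hg⟩ := cone_lemma (V := V) k (fun e => (if e ∈ S then (1:ZMod 2) else 0) + 1) hom
  refine ⟨g, fun e he => ?_⟩
  have := hg e he
  linear_combination this - char2

end AmalgamationHelpers

/-- The class `P^(k)` of finite `(k+1)`-uniform hypergraphs satisfying (†) has the
amalgamation property. -/
theorem dagger_class_AP (k : ℕ) (hk : 2 ≤ k) (H₀ H₁ H₂ : FinHyp (k + 1))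
    (hd₀ : Dagger k H₀.S) (hd₁ : Dagger k H₁.S) (hd₂ : Dagger k H₂.S)
    (f₁ : H₀.V → H₁.V) (f₂ : H₀.V → H₂.V)
    (hf₁ : IsEmb H₀ H₁ f₁) (hf₂ : IsEmb H₀ H₂ f₂) :
    ∃ H : FinHyp (k + 1), Dagger k H.S ∧
      ∃ (g₁ : H₁.V → H.V) (g₂ : H₂.V → H.V),
        IsEmb H₁ H g₁ ∧ IsEmb H₂ H g₂ ∧ g₁ ∘ f₁ = g₂ ∘ f₂ := by
  classical
  obtain ⟨k', rfl⟩ : ∃ k', k = k' + 1 := ⟨k - 1, by omega⟩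
  obtain ⟨hf₁inj, hf₁e⟩ := hf₁
  obtain ⟨hf₂inj, hf₂e⟩ := hf₂
  obtain ⟨g₁, hg₁⟩ := dagger_potential (k' + 1) H₁.S hd₁
  obtain ⟨g₂, hg₂⟩ := dagger_potential (k' + 1) H₂.S hd₂
  set a : Finset H₀.V → ZMod 2 := fun d => g₁ (d.image f₁) with ha
  set b : Finset H₀.V → ZMod 2 := fun d => g₂ (d.image f₂) with hb
  have hab : ∀ e : Finset H₀.V, e.card = k' + 2 →
      ∑ d ∈ e.powersetCard (k' + 1), (a d + b d) = 0 := by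
    intro e he
    have he' : e.card = (k' + 1) + 1 := by omega
    have he1 : (e.image f₁).card = (k' + 1) + 1 := by
      rw [Finset.card_image_of_injective _ hf₁inj]; omega
    have he2 : (e.image f₂).card = (k' + 1) + 1 := by
      rw [Finset.card_image_of_injective _ hf₂inj]; omega
    have h1 := hg₁ (e.image f₁) he1
    rw [sum_powersetCard_image f₁ hf₁inj] at h1
    have h2 := hg₂ (e.image f₂) he2
    rw [sum_powersetCard_image f₂ hf₂inj] at h2
    have hx1 : (if e ∈ H₀.S then (1:ZMod 2) else 0)
        = (∑ d ∈ e.powersetCard (k' + 1), a d) + 1 := by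
      rw [if_congr (hf₁e e he') rfl rfl]; exact h1
    have hx2 : (if e ∈ H₀.S then (1:ZMod 2) else 0)
        = (∑ d ∈ e.powersetCard (k' + 1), b d) + 1 := by
      rw [if_congr (hf₂e e he') rfl rfl]; exact h2
    have hsum : (∑ d ∈ e.powersetCard (k' + 1), a d)
        = ∑ d ∈ e.powersetCard (k' + 1), b d := by
      linear_combination hx2 - hx1
    rw [Finset.sum_add_distrib, hsum]
    linear_combination (∑ d ∈ e.powersetCard (k' + 1), b d) * char2
  obtain ⟨h, hh⟩ := cone_lemma k' (fun d => a d + b d) hab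
  -- the amalgam vertex type
  let Vt := H₁.V ⊕ {x : H₂.V // x ∉ Set.range f₂}
  haveI : DecidableEq Vt := Classical.decEq _
  haveI : Fintype Vt := Fintype.ofFinite _
  let γ₂ : H₂.V → Vt := fun x =>
    if hx : x ∈ Set.range f₂ then Sum.inl (f₁ hx.choose) else Sum.inr ⟨x, hx⟩
  have hcomm : ∀ v, γ₂ (f₂ v) = Sum.inl (f₁ v) := by
    intro v
    have hx : f₂ v ∈ Set.range f₂ := ⟨v, rfl⟩
    simp only [γ₂, dif_pos hx]
    exact congrArg (Sum.inl ∘ f₁) (hf₂inj hx.choose_spec)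
  have hγ₂inj : Function.Injective γ₂ := by
    intro x y hxy
    by_cases hx : x ∈ Set.range f₂ <;> by_cases hy : y ∈ Set.range f₂
    · obtain ⟨u, rfl⟩ := hx; obtain ⟨u', rfl⟩ := hy
      rw [hcomm, hcomm] at hxy
      exact congrArg f₂ (hf₁inj (Sum.inl_injective hxy))
    · simp only [γ₂, dif_pos hx, dif_neg hy] at hxy
      exact (Sum.inl_ne_inr hxy).elim
    · simp only [γ₂, dif_neg hx, dif_pos hy] at hxy
      exact (Sum.inr_ne_inl hxy).elim
    · simp only [γ₂, dif_neg hx, dif_neg hy] at hxy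
      exact congrArg Subtype.val (Sum.inr_injective hxy)
  let htld : Finset H₂.V → ZMod 2 := fun c =>
    if hc : ∃ c₀ : Finset H₀.V, c₀.image f₂ = c then h hc.choose else 0
  have htld_eq : ∀ c₀ : Finset H₀.V, htld (c₀.image f₂) = h c₀ := by
    intro c₀
    have hc : ∃ c₀' : Finset H₀.V, c₀'.image f₂ = c₀.image f₂ := ⟨c₀, rfl⟩
    simp only [htld, dif_pos hc]
    exact congrArg h (Finset.image_injective hf₂inj hc.choose_spec)
  let g₂' : Finset H₂.V → ZMod 2 := fun d => g₂ d + ∑ c ∈ d.powersetCard k', htld c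
  let G : Finset Vt → ZMod 2 := fun d =>
    if hd : ∃ d₁ : Finset H₁.V, d₁.image Sum.inl = d then g₁ hd.choose
    else if hd2 : ∃ d₂ : Finset H₂.V, d₂.image γ₂ = d then g₂' hd2.choose
    else 0
  have hG₁ : ∀ d₁ : Finset H₁.V, G (d₁.image Sum.inl) = g₁ d₁ := by
    intro d₁
    have hd : ∃ d₁' : Finset H₁.V, d₁'.image (Sum.inl : H₁.V → Vt) = d₁.image Sum.inl := ⟨d₁, rfl⟩
    simp only [G, dif_pos hd]
    exact congrArg g₁ (Finset.image_injective (f := (Sum.inl : H₁.V → Vt))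
      Sum.inl_injective hd.choose_spec)
  have key : ∀ d₀ : Finset H₀.V, d₀.card = k' + 1 → g₁ (d₀.image f₁) = g₂' (d₀.image f₂) := by
    intro d₀ hd₀
    have hsum : ∑ c ∈ (d₀.image f₂).powersetCard k', htld c
        = ∑ c ∈ d₀.powersetCard k', h c := by
      rw [sum_powersetCard_image f₂ hf₂inj]
      exact Finset.sum_congr rfl fun c _ => htld_eq c
    have hhd := hh d₀ hd₀
    show a d₀ = g₂' (d₀.image f₂)
    have hexp : g₂' (d₀.image f₂) = b d₀ + (a d₀ + b d₀) := by
      show g₂ (d₀.image f₂) + ∑ c ∈ (d₀.image f₂).powersetCard k', htld c = _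
      rw [hsum, ← hhd]
    rw [hexp]
    linear_combination (-(b d₀)) * char2
  have hG₂ : ∀ d₂ : Finset H₂.V, d₂.card = k' + 1 → G (d₂.image γ₂) = g₂' d₂ := by
    intro d₂ hd₂
    by_cases hcase : ∃ d₁ : Finset H₁.V, d₁.image Sum.inl = d₂.image γ₂
    · have hsub : ∀ x ∈ d₂, x ∈ Set.range f₂ := by
        intro x hx
        by_contra hxr
        obtain ⟨d₁, hd₁⟩ := hcase
        have hmem : γ₂ x ∈ d₁.image Sum.inl := by
          rw [hd₁]; exact Finset.mem_image_of_mem γ₂ hx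
        obtain ⟨y, _, hy⟩ := Finset.mem_image.mp hmem
        rw [show γ₂ x = Sum.inr ⟨x, hxr⟩ from dif_neg hxr] at hy
        simp at hy
      set d₀ : Finset H₀.V := d₂.preimage f₂ hf₂inj.injOn with hd₀def
      have himg : d₀.image f₂ = d₂ := by
        rw [hd₀def, Finset.image_preimage]
        exact Finset.filter_true_of_mem fun x hx => hsub x hx
      have hd₀c : d₀.card = k' + 1 := by
        have hci := Finset.card_image_of_injective d₀ hf₂inj
        rw [himg] at hci
        omega
      have him2 : d₂.image γ₂ = (d₀.image f₁).image Sum.inl := by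
        rw [← himg, Finset.image_image, Finset.image_image]
        exact Finset.image_congr fun x _ => hcomm x
      rw [him2, hG₁, ← himg]
      exact key d₀ hd₀c
    · have hd2' : ∃ d₂' : Finset H₂.V, d₂'.image γ₂ = d₂.image γ₂ := ⟨d₂, rfl⟩
      simp only [G, dif_neg hcase, dif_pos hd2']
      exact congrArg g₂' (Finset.image_injective hγ₂inj hd2'.choose_spec)
  -- the amalgam hypergraph
  have hsmul2 : ∀ x : ZMod 2, (2 : ℕ) • x = 0 := by decide
  let S : Set (Finset Vt) :=
    {e | e.card = k' + 2 ∧ ∑ d ∈ e.powersetCard (k' + 1), G d = 0}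
  refine ⟨⟨Vt, inferInstance, inferInstance, S, fun e he => he.1⟩, ?_, Sum.inl, γ₂, ?_, ?_, ?_⟩
  · -- Dagger
    show Dagger (k' + 1) S
    rw [dagger_iff_s6]
    intro W hW
    have hstep : ∀ A ∈ W.powersetCard ((k' + 1) + 1),
        (@ite (ZMod 2) (A ∈ S) (Classical.propDecidable _) 1 0)
        = (∑ d ∈ A.powersetCard (k' + 1), G d) + 1 := by
      intro A hA
      have hAc := (Finset.mem_powersetCard.mp hA).2
      have hiff : (A ∈ S) ↔ (∑ d ∈ A.powersetCard (k' + 1), G d = 0) := by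
        simp only [S, Set.mem_setOf_eq]
        constructor
        · exact fun hx => hx.2
        · exact fun hx => ⟨by omega, hx⟩
      by_cases hAS : ∑ d ∈ A.powersetCard (k' + 1), G d = 0
      · rw [if_pos (hiff.mpr hAS), hAS, zero_add]
      · rw [if_neg (fun hx => hAS (hiff.mp hx))]
        have h01 : ∀ x : ZMod 2, x = 0 ∨ x = 1 := by decide
        rcases h01 (∑ d ∈ A.powersetCard (k' + 1), G d) with hx | hx
        · exact absurd hx hAS
        · rw [hx]; decide
    refine Eq.trans (Finset.sum_congr rfl hstep) ?_
    rw [Finset.sum_add_distrib, double_sum_powersetCard,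
      Finset.sum_const, Finset.card_powersetCard, hW]
    have hmul : (k' + 1 + 2) - (k' + 1) = 2 := by omega
    rw [hmul]
    rw [Finset.sum_congr rfl fun d _ => hsmul2 (G d), Finset.sum_const_zero, zero_add,
      Nat.choose_succ_self_right, nsmul_eq_mul, mul_one]
    push_cast
    linear_combination char2
  · -- IsEmb H₁ H Sum.inl
    refine ⟨Sum.inl_injective, fun e he => ?_⟩
    have him : (e.image (Sum.inl : H₁.V → Vt)).card = k' + 2 := by
      rw [Finset.card_image_of_injective _ Sum.inl_injective]; omega
    have hδ : ∑ d ∈ (e.image (Sum.inl : H₁.V → Vt)).powersetCard (k' + 1), G d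
        = ∑ d ∈ e.powersetCard (k' + 1), g₁ d := by
      rw [sum_powersetCard_image _ Sum.inl_injective]
      exact Finset.sum_congr rfl fun d _ => hG₁ d
    have hx := hg₁ e he
    constructor
    · intro hmem
      refine ⟨him, ?_⟩
      rw [hδ]
      rw [if_pos hmem] at hx
      linear_combination -hx
    · rintro ⟨-, hs⟩
      rw [hδ] at hs
      by_contra hmem
      rw [if_neg hmem, hs, zero_add] at hx
      exact absurd hx (by decide)
  · -- IsEmb H₂ H γ₂
    refine ⟨hγ₂inj, fun e he => ?_⟩
    have him : (e.image γ₂).card = k' + 2 := by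
      rw [Finset.card_image_of_injective _ hγ₂inj]; omega
    have hδ : ∑ d ∈ (e.image γ₂).powersetCard (k' + 1), G d
        = ∑ d ∈ e.powersetCard (k' + 1), g₂ d := by
      rw [sum_powersetCard_image _ hγ₂inj]
      have h1 : ∀ d ∈ e.powersetCard (k' + 1), G (d.image γ₂)
          = g₂ d + ∑ c ∈ d.powersetCard k', htld c := by
        intro d hd
        exact hG₂ d (Finset.mem_powersetCard.mp hd).2
      rw [Finset.sum_congr rfl h1, Finset.sum_add_distrib, double_sum_powersetCard]
      have hmul : e.card - k' = 2 := by omega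
      rw [hmul, Finset.sum_congr rfl fun c _ => hsmul2 (htld c), Finset.sum_const_zero, add_zero]
    have hx := hg₂ e he
    constructor
    · intro hmem
      refine ⟨him, ?_⟩
      rw [hδ]
      rw [if_pos hmem] at hx
      linear_combination -hx
    · rintro ⟨-, hs⟩
      rw [hδ] at hs
      by_contra hmem
      rw [if_neg hmem, hs, zero_add] at hx
      exact absurd hx (by decide)
  · funext v
    exact (hcomm v).symm
end

section
/- Fix k ∈ ℕ with k ≥ 2. The class P^(k) of all finite (k+1)-uniform hypergraphs satisfying condition (†) has the joint embedding property: for all (V_1,S_1), (V_2,S_2) in P^(k) there exist (V,S) in P^(k) and embeddings g_1 : (V_1,S_1) → (V,S) and g_2 : (V_2,S_2) → (V,S). -/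
open Finset

/-- `k + (δg)(A)` in `ZMod 2`. -/
def edgeVal {V : Type} [DecidableEq V] (k : ℕ) (g : Finset V → ZMod 2)
    (A : Finset V) : ZMod 2 := (k : ZMod 2) + ∑ B ∈ A.powersetCard k, g B

lemma zmod2_idem (v : ZMod 2) : v * v = v := by revert v; decide
lemma zmod2_addself (v : ZMod 2) : v + v = 0 := by revert v; decide
lemma zmod2_neg (v : ZMod 2) : -v = v := by revert v; decide
lemma zmod2_if (v : ZMod 2) : (if v = 1 then (1 : ZMod 2) else 0) = v := by revert v; decide

lemma filter_superset_card {V : Type} [DecidableEq V] {W B : Finset V} {k : ℕ}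
    (hW : W.card = k + 2) (hBW : B ⊆ W) (hB : B.card = k) :
    ((W.powersetCard (k+1)).filter (fun A => B ⊆ A)).card = 2 := by
  have himg : (W.powersetCard (k+1)).filter (fun A => B ⊆ A)
      = (W \ B).image (fun x => insert x B) := by
    ext A
    simp only [mem_filter, mem_powersetCard, mem_image, mem_sdiff]
    constructor
    · rintro ⟨⟨hAW, hA⟩, hBA⟩
      have hcard : (A \ B).card = 1 := by
        rw [card_sdiff_of_subset hBA, hA, hB]; omega
      obtain ⟨x, hx⟩ := card_eq_one.mp hcard
      have hxA : x ∈ A \ B := hx ▸ mem_singleton_self x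
      refine ⟨x, ⟨hAW (mem_sdiff.mp hxA).1, (mem_sdiff.mp hxA).2⟩, ?_⟩
      apply Finset.Subset.antisymm
      · intro y hy
        rcases mem_insert.mp hy with h | h
        · exact h ▸ (mem_sdiff.mp hxA).1
        · exact hBA h
      · intro y hy
        by_cases hyB : y ∈ B
        · exact mem_insert_of_mem hyB
        · have : y ∈ A \ B := mem_sdiff.mpr ⟨hy, hyB⟩
          rw [hx, mem_singleton] at this
          exact this ▸ mem_insert_self _ _
    · rintro ⟨x, ⟨hxW, hxB⟩, rfl⟩
      refine ⟨⟨insert_subset hxW hBW, ?_⟩, subset_insert _ _⟩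
      rw [card_insert_of_notMem hxB, hB]
  rw [himg, card_image_of_injOn, card_sdiff_of_subset hBW, hW, hB]
  · omega
  · intro x hx y hy hxy
    have hxB := (mem_sdiff.mp hx).2
    have hxy' : insert x B = insert y B := hxy
    have : x ∈ insert y B := by rw [← hxy']; exact mem_insert_self x B
    rcases mem_insert.mp this with h | h
    · exact h
    · exact absurd h hxB

/-- Any edge set defined by `edgeVal = 1` satisfies (†). -/
lemma dagger_of_g {V : Type} [DecidableEq V] (k : ℕ) (g : Finset V → ZMod 2) :
    Dagger k {A : Finset V | A.card = k + 1 ∧ edgeVal k g A = 1} := by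
  intro W hW
  have hset : {A : Finset V | A ⊆ W ∧ A.card = k + 1 ∧
      A ∈ {A : Finset V | A.card = k + 1 ∧ edgeVal k g A = 1}}
      = ↑((W.powersetCard (k+1)).filter (fun A => edgeVal k g A = 1)) := by
    ext A
    simp only [Set.mem_setOf_eq, coe_filter, mem_powersetCard]
    tauto
  rw [hset, Set.ncard_coe_finset]
  have key : ((((W.powersetCard (k+1)).filter (fun A => edgeVal k g A = 1)).card : ℕ)
      : ZMod 2) = (k : ZMod 2) := by
    rw [← Finset.sum_boole]
    have h1 : ∑ A ∈ W.powersetCard (k+1), (if edgeVal k g A = 1 then (1 : ZMod 2) else 0)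
        = ∑ A ∈ W.powersetCard (k+1), edgeVal k g A := by
      exact Finset.sum_congr rfl fun A _ => zmod2_if _
    rw [h1]
    unfold edgeVal
    rw [Finset.sum_add_distrib, Finset.sum_const, card_powersetCard, hW]
    have hswap : ∑ A ∈ W.powersetCard (k+1), ∑ B ∈ A.powersetCard k, g B
        = ∑ B ∈ W.powersetCard k,
            ∑ A ∈ (W.powersetCard (k+1)).filter (fun A => B ⊆ A), g B := by
      apply Finset.sum_comm'
      intro A B
      simp only [mem_powersetCard, mem_filter]
      constructor
      · rintro ⟨⟨hAW, hA⟩, hBA, hB⟩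
        exact ⟨⟨⟨hAW, hA⟩, hBA⟩, hBA.trans hAW, hB⟩
      · rintro ⟨⟨⟨hAW, hA⟩, hBA⟩, hBW, hB⟩
        exact ⟨⟨hAW, hA⟩, hBA, hB⟩
    rw [hswap]
    have hz : ∀ B ∈ W.powersetCard k,
        ∑ A ∈ (W.powersetCard (k+1)).filter (fun A => B ⊆ A), g B = 0 := by
      intro B hB
      rw [mem_powersetCard] at hB
      rw [Finset.sum_const, filter_superset_card hW hB.1 hB.2]
      exact zmod2_addself _ ▸ (two_nsmul (g B))
    rw [Finset.sum_congr rfl hz, Finset.sum_const_zero, add_zero]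
    have hch : Nat.choose (k+2) (k+1) = k + 2 := Nat.choose_succ_self_right (k+1)
    rw [hch, nsmul_eq_mul]
    push_cast
    have h2 : (2 : ZMod 2) = 0 := by decide
    rw [h2, add_zero, zmod2_idem]
  have := (ZMod.natCast_eq_natCast_iff _ _ _).mp key
  exact this

/-- Converse: any hypergraph satisfying (†) arises from some `g`. -/
lemma exists_g {V : Type} [DecidableEq V] {k : ℕ} {S : Set (Finset V)}
    (hd : Dagger k S) :
    ∃ g : Finset V → ZMod 2, ∀ A : Finset V, A.card = k + 1 →
      (A ∈ S ↔ edgeVal k g A = 1) := by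
  classical
  by_cases hV : Nonempty V
  · obtain ⟨v₀⟩ := hV
    set χ : Finset V → ZMod 2 := fun A => if A ∈ S then 1 else 0 with hχ
    set t : Finset V → ZMod 2 := fun A => χ A + (k : ZMod 2) with ht
    -- Dagger in ZMod 2 form
    have hdag : ∀ W : Finset V, W.card = k + 2 →
        ∑ A ∈ W.powersetCard (k+1), t A = 0 := by
      intro W hW
      have hset : {A : Finset V | A ⊆ W ∧ A.card = k + 1 ∧ A ∈ S}
          = ↑((W.powersetCard (k+1)).filter (fun A => A ∈ S)) := by
        ext A
        simp only [Set.mem_setOf_eq, coe_filter, mem_powersetCard]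
        tauto
      have hn := hd W hW
      rw [hset, Set.ncard_coe_finset] at hn
      have hc : ((((W.powersetCard (k+1)).filter (fun A => A ∈ S)).card : ℕ) : ZMod 2)
          = (k : ZMod 2) := (ZMod.natCast_eq_natCast_iff _ _ _).mpr hn
      have hχs : ∑ A ∈ W.powersetCard (k+1), χ A
          = ((((W.powersetCard (k+1)).filter (fun A => A ∈ S)).card : ℕ) : ZMod 2) := by
        rw [← Finset.sum_boole]
      have hch : Nat.choose (k+2) (k+1) = k + 2 := Nat.choose_succ_self_right (k+1)
      rw [ht]
      simp only
      rw [Finset.sum_add_distrib, hχs, hc, Finset.sum_const, card_powersetCard, hW,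
        hch, nsmul_eq_mul]
      push_cast
      have h2 : (2 : ZMod 2) = 0 := by decide
      rw [h2, add_zero, zmod2_idem, zmod2_addself]
    set g : Finset V → ZMod 2 := fun B => if v₀ ∈ B then 0 else t (insert v₀ B) with hg
    refine ⟨g, fun A hA => ?_⟩
    have hsum : ∑ B ∈ A.powersetCard k, g B = t A := by
      by_cases hv : v₀ ∈ A
      · have hfe : (A.powersetCard k).filter (fun B => v₀ ∉ B) = {A.erase v₀} := by
          ext B
          simp only [mem_filter, mem_powersetCard, mem_singleton]
          constructor
          · rintro ⟨⟨hBA, hBc⟩, hvB⟩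
            apply Finset.eq_of_subset_of_card_le (subset_erase.mpr ⟨hBA, hvB⟩)
            rw [card_erase_of_mem hv, hA, hBc]; omega
          · rintro rfl
            exact ⟨⟨erase_subset _ _, by rw [card_erase_of_mem hv, hA]; omega⟩, notMem_erase _ _⟩
        rw [← Finset.sum_filter_add_sum_filter_not (A.powersetCard k) (fun B => v₀ ∈ B)]
        have h0 : ∑ B ∈ (A.powersetCard k).filter (fun B => v₀ ∈ B), g B = 0 := by
          apply Finset.sum_eq_zero
          intro B hB
          rw [hg]
          simp only
          rw [if_pos (mem_filter.mp hB).2]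
        rw [h0, zero_add, hfe, Finset.sum_singleton, hg]
        simp only
        rw [if_neg (notMem_erase _ _), insert_erase hv]
      · have hWc : (insert v₀ A).card = k + 2 := by rw [card_insert_of_notMem hv, hA]
        have h0 := hdag (insert v₀ A) hWc
        have hfe : ((insert v₀ A).powersetCard (k+1)).filter (fun A' => v₀ ∉ A') = {A} := by
          ext A'
          simp only [mem_filter, mem_powersetCard, mem_singleton]
          constructor
          · rintro ⟨⟨hsub, hc⟩, hvA'⟩
            apply Finset.eq_of_subset_of_card_le
            · intro x hx
              rcases mem_insert.mp (hsub hx) with h | h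
              · exact absurd (h ▸ hx) hvA'
              · exact h
            · rw [hA, hc]
          · rintro rfl
            exact ⟨⟨subset_insert _ _, hA⟩, hv⟩
        have himg : ((insert v₀ A).powersetCard (k+1)).filter (fun A' => v₀ ∈ A')
            = (A.powersetCard k).image (fun B => insert v₀ B) := by
          ext A'
          simp only [mem_filter, mem_powersetCard, mem_image]
          constructor
          · rintro ⟨⟨hsub, hc⟩, hvA'⟩
            refine ⟨A'.erase v₀, ⟨?_, by rw [card_erase_of_mem hvA', hc]; omega⟩,
              insert_erase hvA'⟩
            intro x hx
            have hx' := mem_erase.mp hx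
            rcases mem_insert.mp (hsub hx'.2) with h | h
            · exact absurd h hx'.1
            · exact h
          · rintro ⟨B, ⟨hBA, hBc⟩, rfl⟩
            have hvB : v₀ ∉ B := fun h => hv (hBA h)
            exact ⟨⟨insert_subset_insert _ hBA, by rw [card_insert_of_notMem hvB, hBc]⟩,
              mem_insert_self _ _⟩
        rw [← Finset.sum_filter_add_sum_filter_not ((insert v₀ A).powersetCard (k+1))
          (fun A' => v₀ ∈ A'), hfe, himg, Finset.sum_singleton] at h0
        have hinj : ∀ B₁ ∈ A.powersetCard k, ∀ B₂ ∈ A.powersetCard k,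
            insert v₀ B₁ = insert v₀ B₂ → B₁ = B₂ := by
          intro B₁ h₁ B₂ h₂ h12
          have hv₁ : v₀ ∉ B₁ := fun h => hv ((mem_powersetCard.mp h₁).1 h)
          have hv₂ : v₀ ∉ B₂ := fun h => hv ((mem_powersetCard.mp h₂).1 h)
          rw [← erase_insert hv₁, ← erase_insert hv₂, h12]
        rw [Finset.sum_image hinj] at h0
        have hgt : ∑ B ∈ A.powersetCard k, g B
            = ∑ B ∈ A.powersetCard k, t (insert v₀ B) := by
          apply Finset.sum_congr rfl
          intro B hB
          have hvB : v₀ ∉ B := fun h => hv ((mem_powersetCard.mp hB).1 h)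
          rw [hg]
          simp only
          rw [if_neg hvB]
        rw [hgt]
        have := add_eq_zero_iff_neg_eq.mp h0
        rw [zmod2_neg] at this
        exact this.symm ▸ rfl
    have hval : edgeVal k g A = χ A := by
      rw [edgeVal, hsum, ht]
      simp only
      rw [add_comm (χ A) _, ← add_assoc, zmod2_addself, zero_add]
    rw [hval, hχ]
    simp only
    constructor
    · intro h; rw [if_pos h]
    · intro h
      by_contra hne
      rw [if_neg hne] at h
      exact absurd h (by decide)
  · refine ⟨fun _ => 0, fun A hA => ?_⟩
    exfalso
    have : A.Nonempty := card_pos.mp (by omega)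
    exact hV ⟨this.choose⟩

/-- The class `P^(k)` of finite `(k+1)`-uniform hypergraphs satisfying (†) has the
joint embedding property. -/
theorem dagger_class_JEP (k : ℕ) (hk : 2 ≤ k) (H₁ H₂ : FinHyp (k + 1))
    (hd₁ : Dagger k H₁.S) (hd₂ : Dagger k H₂.S) :
    ∃ H : FinHyp (k + 1), Dagger k H.S ∧
      ∃ (g₁ : H₁.V → H.V) (g₂ : H₂.V → H.V), IsEmb H₁ H g₁ ∧ IsEmb H₂ H g₂ := by
  classical
  obtain ⟨gg₁, hgg₁⟩ := exists_g hd₁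
  obtain ⟨gg₂, hgg₂⟩ := exists_g hd₂
  set V : Type := H₁.V ⊕ H₂.V with hV
  set g : Finset V → ZMod 2 := fun B =>
    if B.toRight = ∅ then gg₁ B.toLeft
    else if B.toLeft = ∅ then gg₂ B.toRight else 0 with hgdef
  set H : FinHyp (k + 1) :=
    ⟨V, inferInstance, inferInstance,
      {A : Finset V | A.card = k + 1 ∧ edgeVal k g A = 1},
      fun e he => he.1⟩ with hH
  refine ⟨H, dagger_of_g k g, Sum.inl, Sum.inr, ?_, ?_⟩
  · refine ⟨Sum.inl_injective, fun e he => ?_⟩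
    have hmap : e.image (Sum.inl : H₁.V → V)
        = e.map ⟨Sum.inl, Sum.inl_injective⟩ := by ext x; simp
    have hcard : (e.map (⟨Sum.inl, Sum.inl_injective⟩ : H₁.V ↪ V)).card = k + 1 := by
      rw [card_map, he]
    have hsum : ∑ B ∈ (e.map (⟨Sum.inl, Sum.inl_injective⟩ : H₁.V ↪ V)).powersetCard k,
        g B = ∑ B ∈ e.powersetCard k, gg₁ B := by
      rw [powersetCard_map, Finset.sum_map]
      apply Finset.sum_congr rfl
      intro B _
      have h1 : ((mapEmbedding (⟨Sum.inl, Sum.inl_injective⟩ : H₁.V ↪ V)).toEmbedding B).toRight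
          = (∅ : Finset H₂.V) := by
        rw [show (mapEmbedding _).toEmbedding B = B.map _ from rfl]
        ext x
        simp [mem_map]
      have h2 : ((mapEmbedding (⟨Sum.inl, Sum.inl_injective⟩ : H₁.V ↪ V)).toEmbedding B).toLeft
          = B := by
        rw [show (mapEmbedding _).toEmbedding B = B.map _ from rfl]
        ext x
        simp [mem_map]
      rw [hgdef]
      simp only
      rw [if_pos h1, h2]
    have hval : edgeVal k g (e.map (⟨Sum.inl, Sum.inl_injective⟩ : H₁.V ↪ V))
        = edgeVal k gg₁ e := by
      rw [edgeVal, edgeVal, hsum]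
    rw [hgg₁ e he, hmap]
    show edgeVal k gg₁ e = 1 ↔ _ ∈ {A : Finset V | A.card = k + 1 ∧ edgeVal k g A = 1}
    simp only [Set.mem_setOf_eq, hcard, hval, true_and]
  · refine ⟨Sum.inr_injective, fun e he => ?_⟩
    have hmap : e.image (Sum.inr : H₂.V → V)
        = e.map ⟨Sum.inr, Sum.inr_injective⟩ := by ext x; simp
    have hcard : (e.map (⟨Sum.inr, Sum.inr_injective⟩ : H₂.V ↪ V)).card = k + 1 := by
      rw [card_map, he]
    have hsum : ∑ B ∈ (e.map (⟨Sum.inr, Sum.inr_injective⟩ : H₂.V ↪ V)).powersetCard k,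
        g B = ∑ B ∈ e.powersetCard k, gg₂ B := by
      rw [powersetCard_map, Finset.sum_map]
      apply Finset.sum_congr rfl
      intro B hB
      have h1 : ((mapEmbedding (⟨Sum.inr, Sum.inr_injective⟩ : H₂.V ↪ V)).toEmbedding B).toLeft
          = (∅ : Finset H₁.V) := by
        rw [show (mapEmbedding _).toEmbedding B = B.map _ from rfl]
        ext x
        simp [mem_map]
      have h2 : ((mapEmbedding (⟨Sum.inr, Sum.inr_injective⟩ : H₂.V ↪ V)).toEmbedding B).toRight
          = B := by
        rw [show (mapEmbedding _).toEmbedding B = B.map _ from rfl]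
        ext x
        simp [mem_map]
      have hBne : B.Nonempty := by
        rw [mem_powersetCard] at hB
        exact card_pos.mp (by omega)
      have h3 : ((mapEmbedding (⟨Sum.inr, Sum.inr_injective⟩ : H₂.V ↪ V)).toEmbedding B).toRight
          ≠ (∅ : Finset H₂.V) := by
        rw [h2]
        exact nonempty_iff_ne_empty.mp hBne
      rw [hgdef]
      simp only
      rw [if_neg h3, if_pos h1, h2]
    have hval : edgeVal k g (e.map (⟨Sum.inr, Sum.inr_injective⟩ : H₂.V ↪ V))
        = edgeVal k gg₂ e := by
      rw [edgeVal, edgeVal, hsum]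
    rw [hgg₂ e he, hmap]
    show edgeVal k gg₂ e = 1 ↔ _ ∈ {A : Finset V | A.card = k + 1 ∧ edgeVal k g A = 1}
    simp only [Set.mem_setOf_eq, hcard, hval, true_and]
end

section
/- Fix k ∈ ℕ with k ≥ 2. For every finite linearly ordered k-uniform hypergraph (A, R_A, ≤_A) there exists a finite ordered (k+1)-uniform hypergraph (B, S_B, ≤_B) satisfying condition (†) such that: for every k-uniform hypergraph R_B on B with K(R_B) = S_B, there is an order-preserving injection f : A → B such that for every k-element subset e of A, e ∈ R_A if and only if f(e) ∈ R_B. -/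
/-- A finite linearly ordered `m`-uniform hypergraph. -/
structure OrdHyp (m : ℕ) where
  V : Type
  fin : Fintype V
  ord : LinearOrder V
  S : Set (Finset V)
  uniform : ∀ e ∈ S, e.card = m

attribute [instance] OrdHyp.fin OrdHyp.ord

/-- The Kay-graph of a `k`-uniform hypergraph `R` on a vertex type `V`: its hyperedges
are the `(k+1)`-element subsets `A` such that the number of `k`-element subsets of `A`
belonging to `R` is congruent to `k + 1` modulo `2`. -/
def KayT (k : ℕ) {V : Type} [DecidableEq V] (R : Set (Finset V)) : Set (Finset V) :=
  {A : Finset V | A.card = k + 1 ∧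
    {e : Finset V | e ⊆ A ∧ e.card = k ∧ e ∈ R}.ncard % 2 = (k + 1) % 2}

open Finset
open scoped Classical

namespace KayAux

/-- Indicator of a proposition with values in `ZMod 2`. -/
noncomputable def ind (p : Prop) : ZMod 2 := if p then 1 else 0

lemma ind_true {p : Prop} (h : p) : ind p = 1 := by simp [ind, h]
lemma ind_false {p : Prop} (h : ¬ p) : ind p = 0 := by simp [ind, h]

lemma zmod2_cases (z : ZMod 2) : z = 0 ∨ z = 1 := by
  fin_cases z
  · exact Or.inl rfl
  · exact Or.inr rfl

lemma zmod2_add_self (z : ZMod 2) : z + z = 0 := by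
  rcases zmod2_cases z with h | h <;> rw [h] <;> decide

lemma zmod2_mul_self (z : ZMod 2) : z * z = z := by
  rcases zmod2_cases z with h | h <;> rw [h] <;> decide

lemma ind_eq_ind_iff {p q : Prop} (h : ind p = ind q) : p ↔ q := by
  by_cases hp : p <;> by_cases hq : q
  · exact ⟨fun _ => hq, fun _ => hp⟩
  · rw [ind_true hp, ind_false hq] at h; exact absurd h (by decide)
  · rw [ind_false hp, ind_true hq] at h; exact absurd h (by decide)
  · exact ⟨fun h' => absurd h' hp, fun h' => absurd h' hq⟩

lemma natCast_zmod2_eq_iff (a b : ℕ) : (a : ZMod 2) = (b : ZMod 2) ↔ a % 2 = b % 2 := by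
  rw [ZMod.natCast_eq_natCast_iff]; exact Iff.rfl

lemma ind_parity (a b : ℕ) : ind (a % 2 = (b + 1) % 2) = (a : ZMod 2) + (b : ZMod 2) := by
  have ha2 : ((a : ZMod 2)) = ((a % 2 : ℕ) : ZMod 2) := (ZMod.natCast_mod a 2).symm
  have hb2 : ((b : ZMod 2)) = ((b % 2 : ℕ) : ZMod 2) := (ZMod.natCast_mod b 2).symm
  rw [ha2, hb2, show (b+1) % 2 = (b % 2 + 1) % 2 by omega]
  rcases Nat.mod_two_eq_zero_or_one a with ha | ha <;>
    rcases Nat.mod_two_eq_zero_or_one b with hb | hb <;>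
      rw [ha, hb] <;> simp [ind] <;> decide

variable {V : Type}

/-- Number (as used in `KayT`) of `j`-subsets of `A` lying in `R`. -/
noncomputable def cnt (R : Set (Finset V)) (j : ℕ) (A : Finset V) : ℕ :=
  {e : Finset V | e ⊆ A ∧ e.card = j ∧ e ∈ R}.ncard

lemma cnt_eq_sum (R : Set (Finset V)) (j : ℕ) (A : Finset V) :
    (cnt R j A : ZMod 2) = ∑ e ∈ A.powersetCard j, ind (e ∈ R) := by
  have h : {e : Finset V | e ⊆ A ∧ e.card = j ∧ e ∈ R} =
      ↑((A.powersetCard j).filter (· ∈ R)) := by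
    ext e; simp [Finset.mem_powersetCard, and_assoc]
  rw [cnt, h, Set.ncard_coe_finset, Finset.card_filter]
  push_cast
  apply Finset.sum_congr rfl
  intro e _
  by_cases he : e ∈ R <;> simp [ind, he]

lemma kayT_mem_iff {k : ℕ} [inst : DecidableEq V] (R : Set (Finset V)) (A : Finset V) :
    A ∈ KayT k R ↔ A.card = k + 1 ∧ cnt R k A % 2 = (k + 1) % 2 := Iff.rfl

lemma count_supersets {W e : Finset V} {r : ℕ} (hW : e ⊆ W) (he : e.card = r) :
    ((W.powersetCard (r+1)).filter (fun A => e ⊆ A)).card = W.card - r := by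
  have hsd : (W \ e).card = W.card - r := by rw [Finset.card_sdiff_of_subset hW, he]
  rw [← hsd]
  symm
  apply Finset.card_bij (fun x _ => insert x e)
  · intro x hx
    rw [Finset.mem_sdiff] at hx
    simp only [Finset.mem_filter, Finset.mem_powersetCard]
    refine ⟨⟨Finset.insert_subset hx.1 hW, ?_⟩, Finset.subset_insert _ _⟩
    rw [Finset.card_insert_of_notMem hx.2, he]
  · intro x hx y hy hxy
    rw [Finset.mem_sdiff] at hx hy
    have : x ∈ insert y e := hxy ▸ Finset.mem_insert_self x e
    rcases Finset.mem_insert.mp this with h | h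
    · exact h
    · exact absurd h hx.2
  · intro A hA
    simp only [Finset.mem_filter, Finset.mem_powersetCard] at hA
    have hcard : (A \ e).card = 1 := by
      rw [Finset.card_sdiff_of_subset hA.2, hA.1.2, he]; omega
    obtain ⟨y, hy⟩ := Finset.card_eq_one.mp hcard
    have hyA : y ∈ A \ e := hy ▸ Finset.mem_singleton_self y
    rw [Finset.mem_sdiff] at hyA
    refine ⟨y, Finset.mem_sdiff.mpr ⟨hA.1.1 hyA.1, hyA.2⟩, ?_⟩
    apply Finset.eq_of_subset_of_card_le
    · exact Finset.insert_subset hyA.1 hA.2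
    · rw [Finset.card_insert_of_notMem hyA.2, he, hA.1.2]

lemma sum_sum_powersetCard (W : Finset V) (r : ℕ) (g : Finset V → ZMod 2) :
    ∑ A ∈ W.powersetCard (r+1), ∑ e ∈ A.powersetCard r, g e
      = ∑ e ∈ W.powersetCard r, ((W.card - r : ℕ) : ZMod 2) * g e := by
  have h1 : ∀ A ∈ W.powersetCard (r+1),
      ∑ e ∈ A.powersetCard r, g e = ∑ e ∈ (W.powersetCard r).filter (· ⊆ A), g e := by
    intro A hA
    rw [Finset.mem_powersetCard] at hA
    apply Finset.sum_congr _ (fun _ _ => rfl)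
    ext e
    simp only [Finset.mem_powersetCard, Finset.mem_filter]
    exact ⟨fun h => ⟨⟨h.1.trans hA.1, h.2⟩, h.1⟩, fun h => ⟨h.2, h.1.2⟩⟩
  rw [Finset.sum_congr rfl h1]
  simp only [Finset.sum_filter]
  rw [Finset.sum_comm]
  apply Finset.sum_congr rfl
  intro e he
  rw [Finset.mem_powersetCard] at he
  rw [← Finset.sum_filter, Finset.sum_const, count_supersets he.1 he.2, nsmul_eq_mul]

/-- The Kay-graph of any hypergraph satisfies condition (†). -/
lemma dagger_kayT (k : ℕ) [inst : DecidableEq V] (R : Set (Finset V)) :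
    Dagger k (KayT k R) := by
  intro W hW
  have key : ((cnt (KayT k R) (k+1) W : ℕ) : ZMod 2) = (k : ZMod 2) := by
    rw [cnt_eq_sum]
    have hmem : ∀ A ∈ W.powersetCard (k+1), ind (A ∈ KayT k R) =
        (cnt R k A : ZMod 2) + (k : ZMod 2) := by
      intro A hA
      rw [Finset.mem_powersetCard] at hA
      have : (A ∈ KayT k R) ↔ (cnt R k A % 2 = (k+1) % 2) := by
        rw [kayT_mem_iff]
        exact ⟨fun h => h.2, fun h => ⟨hA.2, h⟩⟩
      calc ind (A ∈ KayT k R) = ind (cnt R k A % 2 = (k+1) % 2) := by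
            by_cases h : A ∈ KayT k R
            · rw [ind_true h, ind_true (this.mp h)]
            · rw [ind_false h, ind_false (fun hh => h (this.mpr hh))]
        _ = (cnt R k A : ZMod 2) + (k : ZMod 2) := ind_parity _ k
    rw [Finset.sum_congr rfl hmem]
    rw [Finset.sum_add_distrib]
    have e1 : ∑ A ∈ W.powersetCard (k+1), (cnt R k A : ZMod 2) = 0 := by
      have := sum_sum_powersetCard W k (fun e => ind (e ∈ R))
      rw [Finset.sum_congr rfl (fun A _ => cnt_eq_sum R k A), this, hW]
      apply Finset.sum_eq_zero
      intro e _
      rw [show ((k + 2 - k : ℕ) : ZMod 2) = 0 by rw [show k+2-k = 2 by omega]; decide, zero_mul]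
    rw [e1, zero_add, Finset.sum_const, Finset.card_powersetCard, hW]
    rw [show (k+2).choose (k+1) = k + 2 from Nat.choose_succ_self_right (k+1)]
    rw [nsmul_eq_mul]
    push_cast
    have : ((k : ZMod 2) + 2) = (k : ZMod 2) := by
      rw [show ((2 : ZMod 2)) = 0 by decide, add_zero]
    rw [this, zmod2_mul_self]
  have : cnt (KayT k R) (k+1) W % 2 = k % 2 := (natCast_zmod2_eq_iff _ _).mp key
  exact this

lemma powersetCard_split_insert [DecidableEq V] {b : V} {e : Finset V} (hb : b ∉ e) {m : ℕ}
    (he : e.card = m + 1) (g : Finset V → ZMod 2) :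
    ∑ e' ∈ (insert b e).powersetCard (m+1), g e'
      = g e + ∑ c ∈ e.powersetCard m, g (insert b c) := by
  rw [Finset.powersetCard_succ_insert hb m]
  have hdisj : Disjoint (e.powersetCard (m+1)) ((e.powersetCard m).image (insert b)) := by
    rw [Finset.disjoint_left]
    intro s hs hs'
    rw [Finset.mem_powersetCard] at hs
    obtain ⟨c, hc, rfl⟩ := Finset.mem_image.mp hs'
    exact hb (hs.1 (Finset.mem_insert_self b c))
  rw [Finset.sum_union hdisj]
  congr 1
  · rw [← he, Finset.powersetCard_self, Finset.sum_singleton]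
  · apply Finset.sum_image
    intro c hc c' hc' hcc
    rw [Finset.mem_coe, Finset.mem_powersetCard] at hc hc'
    have hbc : b ∉ c := fun h => hb (hc.1 h)
    have hbc' : b ∉ c' := fun h => hb (hc'.1 h)
    rw [← Finset.erase_insert hbc, ← Finset.erase_insert hbc', hcc]

lemma cone_eval [DecidableEq V] {b : V} (δ : Finset V → ZMod 2) {m : ℕ}
    (hδ : ∀ F : Finset V, F.card = m + 2 → ∑ e' ∈ F.powersetCard (m+1), δ e' = 0)
    {e : Finset V} (he : e.card = m + 1) :
    ∑ c ∈ e.powersetCard m, (if b ∈ c then 0 else δ (insert b c)) = δ e := by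
  by_cases hb : b ∈ e
  · have hsplit : ∑ c ∈ e.powersetCard m, (if b ∈ c then 0 else δ (insert b c))
        = ∑ c ∈ (e.powersetCard m).filter (fun c => b ∉ c), δ (insert b c) := by
      rw [Finset.sum_filter]
      apply Finset.sum_congr rfl
      intro c _
      by_cases h : b ∈ c <;> simp [h]
    have hone : (e.powersetCard m).filter (fun c => b ∉ c) = {e.erase b} := by
      ext c
      simp only [Finset.mem_filter, Finset.mem_powersetCard, Finset.mem_singleton]
      constructor
      · rintro ⟨⟨hsub, hcard⟩, hbc⟩
        apply Finset.eq_of_subset_of_card_le (Finset.subset_erase.mpr ⟨hsub, hbc⟩)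
        rw [Finset.card_erase_of_mem hb, he, hcard]
        omega
      · rintro rfl
        exact ⟨⟨Finset.erase_subset _ _, by rw [Finset.card_erase_of_mem hb, he]; omega⟩,
          Finset.notMem_erase _ _⟩
    rw [hsplit, hone, Finset.sum_singleton, Finset.insert_erase hb]
  · have hcard : (insert b e).card = m + 2 := by
      rw [Finset.card_insert_of_notMem hb, he]
    have hF := hδ (insert b e) hcard
    rw [powersetCard_split_insert hb he δ] at hF
    have hrw : ∑ c ∈ e.powersetCard m, (if b ∈ c then 0 else δ (insert b c))
        = ∑ c ∈ e.powersetCard m, δ (insert b c) := by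
      apply Finset.sum_congr rfl
      intro c hc
      rw [Finset.mem_powersetCard] at hc
      rw [if_neg (fun h => hb (hc.1 h))]
    rw [hrw]
    have : δ e + (δ e + ∑ c ∈ e.powersetCard m, δ (insert b c)) = δ e + 0 := by rw [hF]
    rw [← add_assoc, zmod2_add_self, zero_add, add_zero] at this
    exact this

/-! ### Partite systems and the partite lemma -/

/-- An `n`-partite finite vertex system with a distinguished set of hyperedges. -/
structure Sys (n : ℕ) where
  V : Type
  fin : Finite V
  part : V → Fin n
  R : Set (Finset V)

attribute [instance] Sys.fin

variable {n : ℕ}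

/-- A part-preserving induced embedding of partite systems (for `(m+1)`-uniform edges). -/
def IsCopy (m : ℕ) (P Q : Sys n) (φ : P.V → Q.V) : Prop :=
  Function.Injective φ ∧ (∀ v, Q.part (φ v) = P.part v) ∧
    ∀ e : Finset P.V, e.card = m + 1 → (e.image P.part).card = m + 1 →
      (e.image φ ∈ Q.R ↔ e ∈ P.R)

lemma IsCopy.comp {m : ℕ} {P Q S : Sys n} {φ : P.V → Q.V} {ψ : Q.V → S.V}
    (h1 : IsCopy m P Q φ) (h2 : IsCopy m Q S ψ) : IsCopy m P S (ψ ∘ φ) := by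
  obtain ⟨hinj1, hpart1, hind1⟩ := h1
  obtain ⟨hinj2, hpart2, hind2⟩ := h2
  refine ⟨hinj2.comp hinj1, fun v => by rw [Function.comp_apply, hpart2, hpart1], ?_⟩
  intro e he hep
  have himg : e.image (ψ ∘ φ) = (e.image φ).image ψ := by rw [Finset.image_image]
  have hc1 : (e.image φ).card = m + 1 := by rw [Finset.card_image_of_injective _ hinj1, he]
  have hp1 : ((e.image φ).image Q.part).card = m + 1 := by
    rw [Finset.image_image]
    have : e.image (Q.part ∘ φ) = e.image P.part := Finset.image_congr (fun v _ => hpart1 v)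
    rw [this, hep]
  rw [himg, hind2 _ hc1 hp1, hind1 _ he hep]

/-- The partite lemma: we can stabilize the color of all `K`-transversal `m`-subsets. -/
lemma partite_lemma (m : ℕ) (P : Sys n) (K : Finset (Fin n)) (hK : K.card = m) :
    ∃ Q : Sys n, ∀ χ : Finset Q.V → ZMod 2, ∃ φ : P.V → Q.V, IsCopy m P Q φ ∧
      ∃ c0 : ZMod 2, ∀ s : Finset P.V, s.card = m → s.image P.part = K →
        χ (s.image φ) = c0 := by
  classical
  -- the enlarged system on `P.V ⊕ Fin n`
  let Vt : Type := P.V ⊕ Fin n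
  let pt : Vt → Fin n := Sum.elim P.part id
  let EJ : Set (Finset (Fin n)) :=
    {J | ∃ e ∈ P.R, e.card = m + 1 ∧ e.image P.part = J ∧ J.card = m + 1}
  let Rt : Set (Finset Vt) :=
    {E | (∃ e ∈ P.R, e.card = m + 1 ∧ (e.image P.part).card = m + 1 ∧ E = e.image Sum.inl)
       ∨ ((∃ p : Fin n, Sum.inr p ∈ E) ∧ E.card = m + 1 ∧ E.image pt ∈ EJ)}
  -- the Hales-Jewett alphabet: `K`-transversal `m`-subsets of the enlarged system
  let β := {σ : Finset Vt // σ.card = m ∧ σ.image pt = K}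
  letI : Fintype Vt := Fintype.ofFinite Vt
  letI : Finite β := Subtype.finite
  obtain ⟨ι, hι, hHJ⟩ := Combinatorics.Line.exists_mono_in_high_dimension β (ZMod 2)
  -- the power system
  let QV := {q : Fin n × (ι → Vt) // ∀ i, pt (q.2 i) = q.1}
  let Q : Sys n := ⟨QV, inferInstance, fun q => q.1.1,
    {E | E.card = m + 1 ∧ (E.image (fun q : QV => q.1.1)).card = m + 1 ∧
      ∀ i : ι, E.image (fun q : QV => q.1.2 i) ∈ Rt}⟩
  -- the unique vertex of a letter in a given part
  have huniq : ∀ (σ : β) (κ : Fin n), κ ∈ K → ∃! v, v ∈ σ.1 ∧ pt v = κ := by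
    intro σ κ hκ
    have hinj : Set.InjOn pt σ.1 := Finset.injOn_of_card_image_eq (by rw [σ.2.2, σ.2.1, hK])
    obtain ⟨v, hv, hvp⟩ := Finset.mem_image.mp (σ.2.2 ▸ hκ)
    exact ⟨v, ⟨hv, hvp⟩, fun y hy => hinj hy.1 hv (by rw [hy.2, hvp])⟩
  let vtx : β → (κ : Fin n) → κ ∈ K → Vt :=
    fun σ κ hκ => Finset.choose (fun v => pt v = κ) σ.1 (huniq σ κ hκ)
  have vtx_mem : ∀ σ κ hκ, vtx σ κ hκ ∈ σ.1 :=
    fun σ κ hκ => Finset.choose_mem (fun v => pt v = κ) σ.1 (huniq σ κ hκ)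
  have vtx_part : ∀ σ κ hκ, pt (vtx σ κ hκ) = κ :=
    fun σ κ hκ => Finset.choose_property (fun v => pt v = κ) σ.1 (huniq σ κ hκ)
  have vtx_unique : ∀ (σ : β) (κ : Fin n) (hκ : κ ∈ K) (v : Vt),
      v ∈ σ.1 → pt v = κ → v = vtx σ κ hκ := by
    intro σ κ hκ v hv hvp
    exact (huniq σ κ hκ).unique ⟨hv, hvp⟩ ⟨vtx_mem σ κ hκ, vtx_part σ κ hκ⟩
  -- decoding a point of the hypercube as a `K`-transversal subset of `Q`
  let dec : (ι → β) → Finset QV := fun W =>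
    K.attach.image (fun κ => (⟨(κ.1, fun i => vtx (W i) κ.1 κ.2),
      fun i => vtx_part (W i) κ.1 κ.2⟩ : QV))
  refine ⟨Q, ?_⟩
  intro χ
  obtain ⟨l, c0, hc0⟩ := hHJ (fun W => χ (dec W))
  obtain ⟨i0, hi0⟩ := l.proper
  -- the map used at constant coordinates
  let g : β → Fin n → Vt := fun σ p => if h : p ∈ K then vtx σ p h else Sum.inr p
  have hg_part : ∀ σ p, pt (g σ p) = p := by
    intro σ p
    by_cases h : p ∈ K
    · simp only [g, dif_pos h]; exact vtx_part σ p h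
    · simp only [g, dif_neg h]; rfl
  -- the copy of `P` in `Q` associated to the monochromatic line
  let φc : P.V → (ι → Vt) := fun v i => (l.idxFun i).elim (Sum.inl v) (fun σ => g σ (P.part v))
  have hφc_none : ∀ v i, l.idxFun i = none → φc v i = Sum.inl v := by
    intro v i h; simp only [φc, h, Option.elim]
  have hφc_some : ∀ v i σ, l.idxFun i = some σ → φc v i = g σ (P.part v) := by
    intro v i σ h; simp only [φc, h, Option.elim]
  have hφc_part : ∀ v i, pt (φc v i) = P.part v := by
    intro v i
    cases h : l.idxFun i with
    | none => rw [hφc_none v i h]; rfl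
    | some σ => rw [hφc_some v i σ h, hg_part]
  let φ : P.V → QV := fun v => ⟨(P.part v, φc v), fun i => hφc_part v i⟩
  have hφinj : Function.Injective φ := by
    intro v w h
    have h2 : φc v i0 = φc w i0 := congrArg (fun q : QV => q.1.2 i0) h
    rw [hφc_none v i0 hi0, hφc_none w i0 hi0] at h2
    exact Sum.inl_injective h2
  have hφpart : ∀ v, Q.part (φ v) = P.part v := fun v => rfl
  have hproj : ∀ (e : Finset P.V) (i : ι),
      (e.image φ).image (fun q : QV => q.1.2 i) = e.image (fun v => φc v i) := by
    intro e i; rw [Finset.image_image]; rfl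
  -- the copy is induced
  have hinduced : ∀ e : Finset P.V, e.card = m + 1 → (e.image P.part).card = m + 1 →
      (e.image φ ∈ Q.R ↔ e ∈ P.R) := by
    intro e he hep
    have hcardE : (e.image φ).card = m + 1 := by
      rw [Finset.card_image_of_injective _ hφinj, he]
    have hpartQ : (e.image φ).image (fun q : QV => q.1.1) = e.image P.part := by
      rw [Finset.image_image]; rfl
    constructor
    · rintro ⟨-, -, hall⟩
      have h0 := hall i0
      rw [hproj] at h0
      have him : e.image (fun v => φc v i0) = e.image Sum.inl :=
        Finset.image_congr (fun v _ => hφc_none v i0 hi0)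
      rw [him] at h0
      rcases h0 with ⟨e', he'R, -, -, heq⟩ | ⟨⟨p, hp⟩, -, -⟩
      · have : e' = e := Finset.image_injective Sum.inl_injective heq.symm
        exact this ▸ he'R
      · obtain ⟨v, -, hv⟩ := Finset.mem_image.mp hp
        exact absurd hv (by simp)
    · intro heR
      refine ⟨hcardE, by rw [hpartQ, hep], ?_⟩
      intro i
      rw [hproj]
      cases h : l.idxFun i with
      | none =>
        have him : e.image (fun v => φc v i) = e.image Sum.inl :=
          Finset.image_congr (fun v _ => hφc_none v i h)
        rw [him]
        exact Or.inl ⟨e, heR, he, hep, rfl⟩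
      | some σ =>
        have him : e.image (fun v => φc v i) = e.image (fun v => g σ (P.part v)) :=
          Finset.image_congr (fun v _ => hφc_some v i σ h)
        rw [him]
        right
        have hFpt : (e.image (fun v => g σ (P.part v))).image pt = e.image P.part := by
          rw [Finset.image_image]
          exact Finset.image_congr (fun v _ => hg_part σ (P.part v))
        refine ⟨?_, ?_, ?_⟩
        · have hnsub : ¬ (e.image P.part ⊆ K) := by
            intro hsub
            have h1 := Finset.card_le_card hsub
            rw [hep, hK] at h1
            omega
          obtain ⟨p, hpJ, hpK⟩ := Finset.not_subset.mp hnsub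
          obtain ⟨v, hv, hvp⟩ := Finset.mem_image.mp hpJ
          refine ⟨p, Finset.mem_image.mpr ⟨v, hv, ?_⟩⟩
          rw [← hvp]
          simp only [g, dif_neg (hvp ▸ hpK)]
        · refine le_antisymm (le_trans Finset.card_image_le (le_of_eq he)) ?_
          calc m + 1 = (e.image P.part).card := hep.symm
            _ = ((e.image (fun v => g σ (P.part v))).image pt).card := by rw [hFpt]
            _ ≤ (e.image (fun v => g σ (P.part v))).card := Finset.card_image_le
        · rw [hFpt]
          exact ⟨e, heR, he, rfl, hep⟩
  have heq : ∀ (i1 : DecidableEq QV) (t : Finset P.V),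
      @Finset.image _ _ i1 φ t
        = @Finset.image P.V QV (fun a b => Classical.propDecidable (a = b)) φ t :=
    fun i1 t => by
      cases Subsingleton.elim i1 (fun a b => Classical.propDecidable (a = b)); rfl
  -- constancy on `K`-transversal `m`-subsets
  refine ⟨φ, ⟨hφinj, hφpart, ?_⟩, c0, ?_⟩
  · intro e he hep
    have h2 := hinduced e he hep
    rw [heq] at h2
    exact h2
  intro s hs hsK
  have hσs1 : (s.image (Sum.inl : P.V → Vt)).card = m := by
    rw [Finset.card_image_of_injective _ Sum.inl_injective, hs]
  have hσs2 : (s.image (Sum.inl : P.V → Vt)).image pt = K := by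
    rw [Finset.image_image]
    exact hsK
  let σs : β := ⟨s.image Sum.inl, hσs1, hσs2⟩
  have hmatch : ∀ v ∈ s, ∀ (hκ : P.part v ∈ K),
      (⟨(P.part v, fun i => vtx (l σs i) (P.part v) hκ),
        fun i => vtx_part (l σs i) (P.part v) hκ⟩ : QV) = φ v := by
    intro v hv hκ
    apply Subtype.ext
    show (P.part v, fun i => vtx (l σs i) (P.part v) hκ) = (P.part v, φc v)
    rw [Prod.mk.injEq]
    refine ⟨rfl, ?_⟩
    funext i
    show vtx (l σs i) (P.part v) hκ = φc v i
    cases h : l.idxFun i with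
    | none =>
      have hlx : l σs i = σs := l.apply_none σs i h
      rw [hφc_none v i h, hlx]
      exact (vtx_unique σs (P.part v) hκ (Sum.inl v)
        (Finset.mem_image_of_mem Sum.inl hv) rfl).symm
    | some σ =>
      have hlx : l σs i = σ := by
        show (l.idxFun i).getD σs = σ
        rw [h]
        rfl
      rw [hφc_some v i σ h, hlx]
      simp only [g, dif_pos hκ]
  have hkey : s.image φ = dec (fun i => l σs i) := by
    ext q
    simp only [dec, Finset.mem_image]
    constructor
    · rintro ⟨v, hv, rfl⟩
      have hκ : P.part v ∈ K := hsK ▸ Finset.mem_image_of_mem P.part hv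
      exact ⟨⟨P.part v, hκ⟩, Finset.mem_attach _ _, hmatch v hv hκ⟩
    · rintro ⟨⟨κ, hκ⟩, -, rfl⟩
      obtain ⟨v, hv, hvp⟩ := Finset.mem_image.mp (hsK ▸ hκ : κ ∈ s.image P.part)
      refine ⟨v, hv, ?_⟩
      subst hvp
      exact (hmatch v hv hκ).symm
  have h3 := (congrArg χ hkey).trans (hc0 σs)
  rw [heq] at h3
  exact h3

/-- Iterating the partite lemma over a family of part-sets. -/
lemma chain_lemma (m : ℕ) (P0 : Sys n) (KK : Finset (Finset (Fin n)))
    (hKK : ∀ K ∈ KK, K.card = m) :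
    ∃ Q : Sys n, ∀ χ : Finset Q.V → ZMod 2, ∃ φ : P0.V → Q.V, IsCopy m P0 Q φ ∧
      ∃ cst : Finset (Fin n) → ZMod 2, ∀ K ∈ KK, ∀ s : Finset P0.V,
        s.card = m → s.image P0.part = K → χ (s.image φ) = cst K := by
  induction KK using Finset.induction_on with
  | empty =>
    refine ⟨P0, fun χ => ⟨id, ⟨Function.injective_id, fun v => rfl, ?_⟩, fun _ => 0, by simp⟩⟩
    intro e _ _
    rw [Finset.image_id]
  | insert K0 KK' hK0 ih =>
    obtain ⟨Q', hQ'⟩ := ih (fun K hK => hKK K (Finset.mem_insert_of_mem hK))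
    obtain ⟨Q, hQ⟩ := partite_lemma m Q' K0 (hKK K0 (Finset.mem_insert_self _ _))
    refine ⟨Q, ?_⟩
    intro χ
    obtain ⟨ψ, hψcopy, c0, hψconst⟩ := hQ χ
    obtain ⟨φ', hφ'copy, cst', hφ'const⟩ := hQ' (fun s => χ (s.image ψ))
    refine ⟨ψ ∘ φ', hφ'copy.comp hψcopy, Function.update cst' K0 c0, ?_⟩
    intro K hK s hs hsK
    have himg : s.image (ψ ∘ φ') = (s.image φ').image ψ := by rw [Finset.image_image]
    rcases Finset.mem_insert.mp hK with rfl | hK'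
    · rw [Function.update_self, himg]
      apply hψconst
      · rw [Finset.card_image_of_injective _ hφ'copy.1, hs]
      · rw [Finset.image_image]
        have h2 : s.image (Q'.part ∘ φ') = s.image P0.part :=
          Finset.image_congr (fun v _ => hφ'copy.2.1 v)
        rw [h2, hsK]
    · rw [Function.update_of_ne (by rintro rfl; exact hK0 hK'), himg]
      exact hφ'const K hK' s hs hsK

lemma image_irrel {α β : Type} (i1 i2 : DecidableEq β) (f : α → β) (s : Finset α) :
    @Finset.image α β i1 f s = @Finset.image α β i2 f s := by
  cases Subsingleton.elim i1 i2; rfl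

lemma parity_iff_trans {x y t : ℕ} (h : x % 2 = t % 2 ↔ y % 2 = t % 2) : x % 2 = y % 2 := by
  omega

end KayAux

open KayAux in
set_option maxHeartbeats 3000000 in
/-- The expansion property: for every finite ordered `k`-uniform hypergraph `A` there is
a finite ordered `(k+1)`-uniform hypergraph `B` satisfying (†) such that for every
`k`-uniform hypergraph `R_B` on `B` with Kay-graph `B.S`, the hypergraph `A` embeds into
`(B, R_B)` by an order-preserving injection. -/
theorem kay_expansion_property (k : ℕ) (hk : 2 ≤ k) (A : OrdHyp k) :
    ∃ B : OrdHyp (k + 1), Dagger k B.S ∧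
      ∀ R_B : Set (Finset B.V), (∀ e ∈ R_B, e.card = k) → KayT k R_B = B.S →
        ∃ f : A.V → B.V, StrictMono f ∧
          ∀ e : Finset A.V, e.card = k → (e ∈ A.S ↔ e.image f ∈ R_B) := by
  obtain ⟨m, rfl⟩ : ∃ m, k = m + 1 := ⟨k - 1, by omega⟩
  by_cases hn : Fintype.card A.V = 0
  · -- degenerate case: `A` has no vertices
    haveI hempty : IsEmpty A.V := Fintype.card_eq_zero_iff.mp hn
    refine ⟨⟨PUnit, inferInstance, inferInstance, ∅, by simp⟩, ?_, ?_⟩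
    · intro W hW
      exfalso
      have h1 : W.card ≤ 1 := by
        have := Finset.card_le_univ W
        simpa using this
      omega
    · intro R_B _ _
      refine ⟨fun a => isEmptyElim a, fun a b _ => isEmptyElim a, ?_⟩
      intro e he
      rw [Finset.eq_empty_of_isEmpty e] at he
      simp at he
  -- main case
  have hn1 : 1 ≤ Fintype.card A.V := Nat.pos_of_ne_zero hn
  set n := Fintype.card A.V with hn_def
  let iso : Fin n ≃o A.V := Fintype.orderIsoFinOfCardEq A.V rfl
  let em : A.V → Fin n := fun a => iso.symm a
  have hem_inj : Function.Injective em := fun a b h => iso.symm.injective h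
  let π : Set (Finset (Fin n)) := (fun (e : Finset A.V) => e.image em) '' A.S
  have hπ : ∀ e : Finset A.V, ((e.image em ∈ π) ↔ e ∈ A.S) := by
    intro e
    constructor
    · rintro ⟨e', he', heq⟩
      have : e' = e := Finset.image_injective hem_inj heq
      exact this ▸ he'
    · exact fun h => ⟨e, h, rfl⟩
  -- the base system: one block for each possible twist
  let Wt : Type := Finset (Fin n) → ZMod 2
  let P0 : Sys n := ⟨Wt × Fin n, inferInstance, Prod.snd,
    {E | ∃ w : Wt, ∃ d : Finset (Fin n), d.card = m + 1 ∧
      ind (d ∈ π) + w d = 1 ∧ E = d.image (fun i => (w, i))}⟩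
  have hplinj : ∀ w : Wt, Function.Injective (fun i : Fin n => ((w, i) : Wt × Fin n)) :=
    fun w i j h => congrArg Prod.snd h
  have hextract : ∀ (w : Wt) (d : Finset (Fin n)), d.card = m + 1 →
      ((d.image (fun i => (w, i)) ∈ P0.R) ↔ ind (d ∈ π) + w d = 1) := by
    intro w d hd
    constructor
    · rintro ⟨w', d', hd', hcond, heq⟩
      have hne : (d.image (fun i => ((w, i) : Wt × Fin n))).Nonempty := by
        rw [Finset.image_nonempty]
        exact Finset.card_pos.mp (by omega)
      have hw : w' = w := by
        obtain ⟨x, hx⟩ := hne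
        have hx2 : x ∈ d'.image (fun i => ((w', i) : Wt × Fin n)) := heq ▸ hx
        obtain ⟨i, _, hi⟩ := Finset.mem_image.mp hx2
        obtain ⟨j, _, hj⟩ := Finset.mem_image.mp hx
        rw [← hj] at hi
        exact congrArg Prod.fst hi
      subst hw
      have hd2 : d' = d := Finset.image_injective (hplinj w') heq.symm
      subst hd2
      exact hcond
    · intro h
      exact ⟨w, d, hd, h, rfl⟩
  -- the Ramsey-type system from the chain lemma
  let KK : Finset (Finset (Fin n)) := (Finset.univ : Finset (Fin n)).powersetCard m
  obtain ⟨Q, hQ⟩ := chain_lemma m P0 KK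
    (fun K hK => (Finset.mem_powersetCard.mp hK).2)
  -- a linear order on Q.V refining the parts
  letI : Fintype Q.V := Fintype.ofFinite Q.V
  let emb : Q.V → Lex (Fin n × Fin (Fintype.card Q.V)) :=
    fun q => toLex (Q.part q, (Fintype.equivFin Q.V) q)
  have hemb : Function.Injective emb := by
    intro x y h
    have h2 := congrArg (fun p => (ofLex p).2) h
    exact (Fintype.equivFin Q.V).injective h2
  let lo : LinearOrder Q.V := LinearOrder.lift' emb hemb
  refine ⟨⟨Q.V, inferInstance, lo, KayT (m+1) Q.R, fun e he => he.1⟩,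
    dagger_kayT (m+1) Q.R, ?_⟩
  intro R_B hunif hKay
  have hKay' : KayT (m+1) R_B = KayT (m+1) Q.R := hKay
  -- the parity difference of `R_B` and `Q.R` and its coboundary structure
  let δ : Finset Q.V → ZMod 2 := fun F => ind (F ∈ R_B) + ind (F ∈ Q.R)
  have hδ : ∀ F : Finset Q.V, F.card = m + 2 →
      ∑ e' ∈ F.powersetCard (m+1), δ e' = 0 := by
    intro F hF
    have h1 : (F ∈ KayT (m+1) R_B) ↔ (F ∈ KayT (m+1) Q.R) := by rw [hKay']
    rw [kayT_mem_iff R_B F, kayT_mem_iff Q.R F] at h1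
    have hcard : F.card = (m+1) + 1 := by omega
    have h2 : cnt R_B (m+1) F % 2 = ((m+1)+1) % 2 ↔ cnt Q.R (m+1) F % 2 = ((m+1)+1) % 2 := by
      constructor
      · intro h; exact (h1.mp ⟨hcard, h⟩).2
      · intro h; exact (h1.mpr ⟨hcard, h⟩).2
    have h3 : cnt R_B (m+1) F % 2 = cnt Q.R (m+1) F % 2 := parity_iff_trans h2
    have h4 : (cnt R_B (m+1) F : ZMod 2) = (cnt Q.R (m+1) F : ZMod 2) :=
      (natCast_zmod2_eq_iff _ _).mpr h3
    rw [cnt_eq_sum, cnt_eq_sum] at h4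
    calc ∑ e' ∈ F.powersetCard (m+1), δ e'
        = (∑ e' ∈ F.powersetCard (m+1), ind (e' ∈ R_B))
          + ∑ e' ∈ F.powersetCard (m+1), ind (e' ∈ Q.R) := Finset.sum_add_distrib
      _ = (∑ e' ∈ F.powersetCard (m+1), ind (e' ∈ Q.R))
          + ∑ e' ∈ F.powersetCard (m+1), ind (e' ∈ Q.R) := by rw [h4]
      _ = 0 := zmod2_add_self _
  -- a base vertex and the cone coloring
  obtain ⟨φ0, hφ0, -⟩ := hQ (fun _ => 0)
  let b : Q.V := φ0 ((fun _ => 0, ⟨0, hn1⟩) : Wt × Fin n)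
  obtain ⟨φ, hφcopy, cst, hconst⟩ := hQ (fun c => if b ∈ c then 0 else δ (insert b c))
  let w : Wt := fun d => ∑ K ∈ d.powersetCard m, cst K
  let f : A.V → Q.V := fun a => φ (w, em a)
  have hpart_f : ∀ a, Q.part (f a) = em a := fun a => hφcopy.2.1 (w, em a)
  refine ⟨f, ?_, ?_⟩
  · -- strict monotonicity
    intro a a' haa
    show emb (f a) < emb (f a')
    apply Prod.Lex.lt_iff.mpr
    left
    show Q.part (f a) < Q.part (f a')
    rw [hpart_f, hpart_f]
    exact iso.symm.strictMono haa
  intro e he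
  -- notation
  let d : Finset (Fin n) := e.image em
  have hd : d.card = m + 1 := by
    rw [show d = e.image em from rfl, Finset.card_image_of_injective _ hem_inj, he]
  let pl : Fin n → Wt × Fin n := fun i => (w, i)
  let E0 : Finset (Wt × Fin n) := d.image pl
  have hE0card : E0.card = m + 1 := by
    rw [show E0 = d.image pl from rfl, Finset.card_image_of_injective _ (hplinj w), hd]
  have hE0pteq : E0.image P0.part = d := by
    rw [show E0 = d.image pl from rfl, Finset.image_image]
    exact Finset.image_id
  have hE0part : (E0.image P0.part).card = m + 1 := by rw [hE0pteq, hd]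
  let F : Finset Q.V := E0.image φ
  have hFcard : F.card = m + 1 := by
    rw [show F = E0.image φ from rfl, Finset.card_image_of_injective _ hφcopy.1, hE0card]
  have hgoalimg : e.image f = F := by
    show e.image f = (d.image pl).image φ
    rw [Finset.image_image, Finset.image_image]
    rfl
  -- the cone evaluation
  have hcone : (∑ c ∈ F.powersetCard m, if b ∈ c then 0 else δ (insert b c)) = δ F :=
    cone_eval (b := b) δ hδ hFcard
  -- reindex the sum over `m`-subsets of the block
  let emb2 : Fin n ↪ Q.V := ⟨fun i => φ (w, i), fun i j h => (hplinj w) (hφcopy.1 h)⟩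
  have hFmap : F = d.map emb2 := by
    rw [Finset.map_eq_image]
    show (d.image pl).image φ = d.image _
    rw [Finset.image_image]
    rfl
  have hsum : (∑ c ∈ F.powersetCard m, if b ∈ c then 0 else δ (insert b c))
      = ∑ s ∈ d.powersetCard m, cst s := by
    rw [hFmap, Finset.powersetCard_map, Finset.sum_map]
    apply Finset.sum_congr rfl
    intro s hs
    rw [Finset.mem_powersetCard] at hs
    have h1 : (Finset.mapEmbedding emb2).toEmbedding s = s.map emb2 :=
      Finset.mapEmbedding_apply
    rw [h1]
    have hcard' : (s.image pl).card = m := by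
      rw [Finset.card_image_of_injective _ (hplinj w), hs.2]
    have hpart' : (s.image pl).image P0.part = s := by
      rw [Finset.image_image]
      exact Finset.image_id
    have hKmem : s ∈ KK := Finset.mem_powersetCard.mpr ⟨Finset.subset_univ s, hs.2⟩
    have h2 := hconst s hKmem (s.image pl) hcard' hpart'
    have h3 : s.map emb2
        = @Finset.image P0.V Q.V (fun a b => Classical.propDecidable (a = b)) φ (s.image pl) :=
      Eq.trans (by
        rw [Finset.map_eq_image]
        show s.image _ = _
        rw [Finset.image_image]
        rfl) (image_irrel _ _ φ (s.image pl))
    rw [h3]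
    exact h2
  have hδF : δ F = w d := by
    rw [← hcone]
    exact hsum
  -- the planted pattern
  have hpat : (F ∈ Q.R) ↔ (ind (d ∈ π) + w d = 1) := by
    have h4 := (hφcopy.2.2 E0 hE0card hE0part).trans (hextract w d hd)
    have h9 : F = @Finset.image P0.V Q.V (fun a b => Classical.propDecidable (a = b)) φ E0 :=
      image_irrel _ _ φ E0
    rw [h9]
    exact h4
  -- put everything together
  have h5 : ind (F ∈ R_B) = ind (F ∈ Q.R) + δ F := by
    show ind (F ∈ R_B) = ind (F ∈ Q.R) + (ind (F ∈ R_B) + ind (F ∈ Q.R))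
    calc ind (F ∈ R_B)
        = ind (F ∈ R_B) + (ind (F ∈ Q.R) + ind (F ∈ Q.R)) := by
          rw [zmod2_add_self, add_zero]
      _ = ind (F ∈ Q.R) + (ind (F ∈ R_B) + ind (F ∈ Q.R)) := by ring
  have h6 : ind (F ∈ Q.R) = ind (d ∈ π) + w d := by
    rcases zmod2_cases (ind (d ∈ π) + w d) with h0 | h0
    · rw [h0]
      apply ind_false
      intro hmem
      exact absurd (h0 ▸ hpat.mp hmem) (by decide)
    · rw [h0]
      exact ind_true (hpat.mpr h0)
  have h7 : ind (F ∈ R_B) = ind (d ∈ π) := by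
    rw [h5, h6, hδF, add_assoc, zmod2_add_self, add_zero]
  have h8 : (F ∈ R_B) ↔ (d ∈ π) := ind_eq_ind_iff h7
  have hfinal : (e ∈ A.S) ↔ (F ∈ R_B) := ((hπ e).symm).trans h8.symm
  convert hfinal using 2
end
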